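/- arXiv:2412.10979 — 10 statements merged into one kernel-verified Lean document; each statement's English description precedes it below -/
import Mathlib

section
/- Let m, n, h be positive integers, b > 0, ν > 0, λ₂ > 0. For l = 1, …, h and i = 1, …, m let A_l^i ∈ ℝ^{n×n} be symmetric with 0 ⪯ A_l^i ⪯ b·I_n, and let A_l = diag(A_l^1, …, A_l^m) ∈ ℝ^{mn×mn} be the block-diagonal matrix with these blocks. Let L ∈ ℝ^{m×m} be symmetric positive semidefinite with L𝟙 = 0 and xᵀLx ≥ λ₂‖x‖² for every x ∈ ℝ^m orthogonal to the all-ones vector 𝟙. Then λ_min(∑_{l=1}^h (A_l + ν·(L ⊗ I_n))) ≥ (ν λ₂ / (m(2b + ν λ₂))) · λ_min(∑_{i=1}^m ∑_{l=1}^h A_l^i). -/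
open Matrix
open scoped Kronecker

/-!
Write `x = p + d`, where the consensus part `p` repeats the mean `x̄` of the `m` blocks of `x`
and the deviation `d` has zero block sum, so `‖x‖² = m ‖x̄‖² + ‖d‖²`. Since `L 𝟙 = 0`, the
coupling term only sees the deviation: `xᵀ (L ⊗ I) x = dᵀ (L ⊗ I) d ≥ λ₂ ‖d‖²`. The block-diagonal
term `𝒜 = ∑ₗ Aₗ` controls the consensus part: `pᵀ 𝒜 p = x̄ᵀ (∑ᵢ ∑ₗ Aₗⁱ) x̄ ≥ t ‖x̄‖²`, while
`pᵀ 𝒜 p ≤ (1 + s) xᵀ 𝒜 x + (1 + 1/s) dᵀ 𝒜 d` and `dᵀ 𝒜 d ≤ h b ‖d‖²`. Together with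
`t ≤ m h b`, the choice `s = 2b / (ν λ₂)` yields the claimed bound.
-/

variable {ι κ : Type*}

namespace Matrix

lemma IsSymm.dotProduct_mulVec_comm [Fintype κ] {R : Type*} [CommSemiring R]
    {M : Matrix κ κ R} (hM : M.IsSymm) (v w : κ → R) : v ⬝ᵥ (M *ᵥ w) = w ⬝ᵥ (M *ᵥ v) := by
  rw [dotProduct_mulVec, ← mulVec_transpose, hM.eq, dotProduct_comm]

lemma PosSemidef.isSymm {M : Matrix κ κ ℝ} (hM : M.PosSemidef) : M.IsSymm :=
  isHermitian_iff_isSymm.1 hM.1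

lemma dotProduct_mulVec_le_of_posSemidef_sub [Fintype κ] {M N : Matrix κ κ ℝ}
    (h : (M - N).PosSemidef) (v : κ → ℝ) : v ⬝ᵥ (N *ᵥ v) ≤ v ⬝ᵥ (M *ᵥ v) := by
  have := h.dotProduct_mulVec_nonneg v
  rw [star_trivial, sub_mulVec, dotProduct_sub] at this
  linarith

lemma dotProduct_smul_one_mulVec [Fintype κ] [DecidableEq κ] (c : ℝ) (v : κ → ℝ) :
    v ⬝ᵥ ((c • (1 : Matrix κ κ ℝ)) *ᵥ v) = c * (v ⬝ᵥ v) := by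
  rw [smul_mulVec, one_mulVec, dotProduct_smul, smul_eq_mul]

lemma le_of_posSemidef_sub_smul_one [DecidableEq κ] [Nonempty κ] {M : Matrix κ κ ℝ} {t B : ℝ}
    (ht : (M - t • 1).PosSemidef) (hB : (B • 1 - M).PosSemidef) : t ≤ B := by
  have := (ht.add hB).diag_nonneg (i := Classical.arbitrary κ)
  rw [sub_add_sub_cancel', ← sub_smul] at this
  simpa using this

lemma posSemidef_card_mul_smul_one_sub_sum [Fintype κ] [DecidableEq κ] {τ : Type*} [Fintype τ]
    {M : τ → Matrix κ κ ℝ} {B : ℝ} (hMB : ∀ l, (B • 1 - M l).PosSemidef) :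
    ((Fintype.card τ * B) • 1 - ∑ l, M l).PosSemidef := by
  rw [show (Fintype.card τ * B) • (1 : Matrix κ κ ℝ) - ∑ l, M l = ∑ l, (B • 1 - M l) by
    rw [Finset.sum_sub_distrib, Finset.sum_const, Finset.card_univ, ← Nat.cast_smul_eq_nsmul ℝ,
      smul_smul]]
  exact posSemidef_sum _ fun l _ => hMB l

lemma PosSemidef.dotProduct_mulVec_sub_le [Fintype κ] {M : Matrix κ κ ℝ} (hM : M.PosSemidef)
    (a b : κ → ℝ) {s : ℝ} (hs : 0 < s) :
    (a - b) ⬝ᵥ (M *ᵥ (a - b)) ≤ (1 + s) * (a ⬝ᵥ (M *ᵥ a)) + (1 + s⁻¹) * (b ⬝ᵥ (M *ᵥ b)) := by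
  have hpos := hM.dotProduct_mulVec_nonneg (s • a + b)
  have hba := hM.isSymm.dotProduct_mulVec_comm b a
  simp only [star_trivial, mulVec_add, mulVec_smul, mulVec_sub, dotProduct_add, add_dotProduct,
    dotProduct_sub, sub_dotProduct, dotProduct_smul, smul_dotProduct, smul_eq_mul] at hpos ⊢
  have hcross : -2 * (a ⬝ᵥ (M *ᵥ b)) ≤ s * (a ⬝ᵥ (M *ᵥ a)) + s⁻¹ * (b ⬝ᵥ (M *ᵥ b)) := by
    rw [← mul_le_mul_iff_of_pos_left hs, mul_add, mul_inv_cancel_left₀ hs.ne']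
    nlinarith
  nlinarith

lemma dotProduct_mulVec_sub_const [Fintype ι] {R : Type*} [CommRing R] {L : Matrix ι ι R}
    (hL : L.IsSymm) (hL1 : L *ᵥ (fun _ => 1) = 0) (y : ι → R) (a : R) :
    (y - fun _ => a) ⬝ᵥ (L *ᵥ (y - fun _ => a)) = y ⬝ᵥ (L *ᵥ y) := by
  have hLa : L *ᵥ (fun _ => a) = 0 := by
    rw [show (fun _ => a) = a • (fun _ : ι => (1 : R)) by ext; simp, mulVec_smul, hL1, smul_zero]
  rw [mulVec_sub, hLa, sub_zero, sub_dotProduct, hL.dotProduct_mulVec_comm (fun _ => a) y, hLa,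
    dotProduct_zero, sub_zero]

/-- `diag(A₁, …, Aₘ)` with the block index as the first coordinate, as in `L ⊗ₖ 1`
(Mathlib's `blockDiagonal` puts it second). -/
def blockDiagonalFst [DecidableEq ι] {α : Type*} [Zero α] (A : ι → Matrix κ κ α) :
    Matrix (ι × κ) (ι × κ) α :=
  of fun p q => if p.1 = q.1 then A p.1 p.2 q.2 else 0

section blockDiagonalFst

variable [DecidableEq ι] {R : Type*}

lemma blockDiagonalFst_sum [AddCommMonoid R] {τ : Type*} (s : Finset τ)
    (A : τ → ι → Matrix κ κ R) :
    blockDiagonalFst (∑ l ∈ s, A l) = ∑ l ∈ s, blockDiagonalFst (A l) := by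
  ext p q
  by_cases h : p.1 = q.1 <;> simp [blockDiagonalFst, sum_apply, h]

lemma dotProduct_mulVec_blockDiagonalFst [Fintype ι] [Fintype κ] [CommSemiring R]
    (A : ι → Matrix κ κ R) (x y : ι × κ → R) :
    x ⬝ᵥ (blockDiagonalFst A *ᵥ y) =
      ∑ i, Function.curry x i ⬝ᵥ (A i *ᵥ Function.curry y i) := by
  simp [blockDiagonalFst, dotProduct, mulVec, Fintype.sum_prod_type, ite_mul,
    Finset.sum_ite_eq, Finset.mul_sum]

lemma IsHermitian.blockDiagonalFst [AddMonoid R] [StarAddMonoid R] {A : ι → Matrix κ κ R}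
    (hA : ∀ i, (A i).IsHermitian) : (blockDiagonalFst A).IsHermitian := by
  ext p q
  by_cases h : p.1 = q.1
  · simp [Matrix.blockDiagonalFst, h, ← (hA q.1).apply p.2 q.2]
  · simp [Matrix.blockDiagonalFst, h, Ne.symm h]

lemma PosSemidef.blockDiagonalFst [Fintype ι] [Fintype κ] {A : ι → Matrix κ κ ℝ}
    (hA : ∀ i, (A i).PosSemidef) : (blockDiagonalFst A).PosSemidef := by
  refine .of_dotProduct_mulVec_nonneg (.blockDiagonalFst fun i => (hA i).1) fun x => ?_
  rw [star_trivial, dotProduct_mulVec_blockDiagonalFst]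
  exact Finset.sum_nonneg fun i _ => by simpa using (hA i).dotProduct_mulVec_nonneg _

end blockDiagonalFst

lemma dotProduct_mulVec_kronecker_one [Fintype ι] [Fintype κ] [DecidableEq κ] {R : Type*}
    [CommSemiring R] (L : Matrix ι ι R) (x y : ι × κ → R) :
    x ⬝ᵥ ((L ⊗ₖ (1 : Matrix κ κ R)) *ᵥ y) =
      ∑ j, (fun i => x (i, j)) ⬝ᵥ (L *ᵥ fun i => y (i, j)) := by
  simp only [dotProduct, mulVec, kroneckerMap_apply, one_apply, mul_ite, mul_one, mul_zero,
    ite_mul, zero_mul, Fintype.sum_prod_type, Finset.sum_ite_eq, Finset.mem_univ, ↓reduceIte,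
    Finset.mul_sum]
  rw [Finset.sum_comm]

lemma IsHermitian.kronecker_one [DecidableEq κ] {R : Type*} [CommSemiring R] [StarRing R]
    {L : Matrix ι ι R} (hL : L.IsHermitian) : (L ⊗ₖ (1 : Matrix κ κ R)).IsHermitian := by
  rw [IsHermitian, conjTranspose_kronecker, hL.eq, conjTranspose_one]

end Matrix

open Matrix

noncomputable def colMean [Fintype ι] (x : ι × κ → ℝ) (j : κ) : ℝ :=
  (∑ i, x (i, j)) / Fintype.card ι

section colMean

variable [Fintype ι] [Nonempty ι]

lemma sum_sub_colMean (x : ι × κ → ℝ) (j : κ) : ∑ i, (x (i, j) - colMean x j) = 0 := by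
  rw [Finset.sum_sub_distrib, Finset.sum_const, Finset.card_univ, nsmul_eq_mul, colMean,
    mul_div_cancel₀ _ (by positivity), sub_self]

lemma dotProduct_self_eq_card_mul_add [Fintype κ] (x : ι × κ → ℝ) :
    x ⬝ᵥ x = Fintype.card ι * (colMean x ⬝ᵥ colMean x) +
      (x - colMean x ∘ Prod.snd) ⬝ᵥ (x - colMean x ∘ Prod.snd) := by
  set p := colMean x ∘ Prod.snd
  have hpp : p ⬝ᵥ p = Fintype.card ι * (colMean x ⬝ᵥ colMean x) := by
    simp [p, dotProduct, Fintype.sum_prod_type]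
  have hpd : p ⬝ᵥ (x - p) = 0 := by
    simp only [p, dotProduct, Fintype.sum_prod_type, Function.comp_apply, Pi.sub_apply]
    rw [Finset.sum_comm]
    simp only [← Finset.mul_sum, sum_sub_colMean, mul_zero, Finset.sum_const_zero]
  calc x ⬝ᵥ x = (p + (x - p)) ⬝ᵥ (p + (x - p)) := by rw [add_sub_cancel]
    _ = p ⬝ᵥ p + 2 * (p ⬝ᵥ (x - p)) + (x - p) ⬝ᵥ (x - p) := by
      rw [add_dotProduct, dotProduct_add, dotProduct_add, dotProduct_comm (x - p) p]; ring
    _ = _ := by rw [hpp, hpd]; ring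

lemma le_dotProduct_mulVec_kronecker_one [Fintype κ] [DecidableEq κ] {L : Matrix ι ι ℝ}
    (hL : L.IsSymm) (hL1 : L *ᵥ (fun _ => 1) = 0) {lam : ℝ}
    (hgap : ∀ y : ι → ℝ, y ⬝ᵥ (fun _ => 1) = 0 → lam * (y ⬝ᵥ y) ≤ y ⬝ᵥ (L *ᵥ y))
    (x : ι × κ → ℝ) :
    lam * ((x - colMean x ∘ Prod.snd) ⬝ᵥ (x - colMean x ∘ Prod.snd)) ≤
      x ⬝ᵥ ((L ⊗ₖ (1 : Matrix κ κ ℝ)) *ᵥ x) := by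
  rw [dotProduct_mulVec_kronecker_one, dotProduct, Fintype.sum_prod_type, Finset.sum_comm,
    Finset.mul_sum]
  refine Finset.sum_le_sum fun j _ => ?_
  have hcol := hgap ((fun i => x (i, j)) - fun _ => colMean x j) (by
    simpa [dotProduct] using sum_sub_colMean x j)
  rwa [dotProduct_mulVec_sub_const hL hL1] at hcol

end colMean

lemma div_mul_mul_add_le_add_mul {B g m t u S D : ℝ} (hB : 0 < B) (hg : 0 < g) (hm : 0 < m)
    (hD : 0 ≤ D) (htu : t * u ≤ (1 + 2 * B / g) * S + (1 + (2 * B / g)⁻¹) * (B * D))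
    (htB : t ≤ m * B) :
    g / (m * (2 * B + g)) * t * (m * u + D) ≤ S + g * D := by
  rw [inv_div] at htu
  rw [div_mul_eq_mul_div, div_mul_eq_mul_div, div_le_iff₀ (by positivity)]
  have hgtu : g * t * u ≤ (g + 2 * B) * S + g * (2 * B + g) / 2 * D := by
    have := mul_le_mul_of_nonneg_left htu hg.le
    field_simp at this
    nlinarith
  nlinarith [mul_le_mul_of_nonneg_right htB (mul_nonneg hg.le hD),
    mul_le_mul_of_nonneg_left hgtu hm.le, mul_nonneg (mul_nonneg hm.le hg.le) (mul_nonneg hg.le hD)]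

theorem posSemidef_blockDiagonalFst_add_smul_kronecker_one_sub
    [Fintype ι] [Fintype κ] [DecidableEq ι] [DecidableEq κ] [Nonempty ι] [Nonempty κ]
    {B μ lam t : ℝ} (hB : 0 < B) (hμ : 0 < μ) (hlam : 0 < lam)
    {M : ι → Matrix κ κ ℝ} (hM : ∀ i, (M i).PosSemidef) (hMB : ∀ i, (B • 1 - M i).PosSemidef)
    {L : Matrix ι ι ℝ} (hL : L.PosSemidef) (hL1 : L *ᵥ (fun _ => 1) = 0)
    (hgap : ∀ y : ι → ℝ, y ⬝ᵥ (fun _ => 1) = 0 → lam * (y ⬝ᵥ y) ≤ y ⬝ᵥ (L *ᵥ y))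
    (ht : ((∑ i, M i) - t • 1).PosSemidef) :
    (blockDiagonalFst M + μ • (L ⊗ₖ (1 : Matrix κ κ ℝ)) -
      (μ * lam / (Fintype.card ι * (2 * B + μ * lam)) * t) • 1).PosSemidef := by
  refine .of_dotProduct_mulVec_nonneg (((IsHermitian.blockDiagonalFst fun i => (hM i).1).add
    (hL.1.kronecker_one.smul (.all μ))).sub (isHermitian_one.smul (.all _))) fun x => ?_
  rw [star_trivial]
  set m : ℝ := (Fintype.card ι : ℝ)
  set c := colMean x
  set d := x - c ∘ Prod.snd
  -- this weight makes the coefficient of `xᵀ 𝒜 x` in the final estimate exactly `1`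
  have hsplit := (PosSemidef.blockDiagonalFst hM).dotProduct_mulVec_sub_le x d
    (s := 2 * B / (μ * lam)) (by positivity)
  rw [sub_sub_cancel] at hsplit
  have hmean : t * (c ⬝ᵥ c) ≤ (c ∘ Prod.snd) ⬝ᵥ (blockDiagonalFst M *ᵥ (c ∘ Prod.snd)) := by
    have := dotProduct_mulVec_le_of_posSemidef_sub ht c
    rw [dotProduct_smul_one_mulVec, sum_mulVec, dotProduct_sum] at this
    rwa [dotProduct_mulVec_blockDiagonalFst]
  have hdev : d ⬝ᵥ (blockDiagonalFst M *ᵥ d) ≤ B * (d ⬝ᵥ d) := by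
    rw [dotProduct_mulVec_blockDiagonalFst, dotProduct, Fintype.sum_prod_type, Finset.mul_sum]
    refine Finset.sum_le_sum fun i _ => ?_
    have := dotProduct_mulVec_le_of_posSemidef_sub (hMB i) (Function.curry d i)
    rwa [dotProduct_smul_one_mulVec] at this
  have htB : t ≤ m * B :=
    le_of_posSemidef_sub_smul_one ht (posSemidef_card_mul_smul_one_sub_sum hMB)
  have hlap := le_dotProduct_mulVec_kronecker_one hL.isSymm hL1 hgap x
  have hd0 : 0 ≤ d ⬝ᵥ d := by simpa using dotProduct_self_star_nonneg d
  have key := div_mul_mul_add_le_add_mul hB (mul_pos hμ hlam) (by positivity) hd0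
    (hmean.trans (hsplit.trans (by gcongr))) htB
  simp only [sub_mulVec, add_mulVec, smul_mulVec, dotProduct_sub, dotProduct_add,
    dotProduct_smul, one_mulVec, smul_eq_mul]
  rw [dotProduct_self_eq_card_mul_add x]
  linarith [mul_le_mul_of_nonneg_left hlap hμ.le]

/-- The paper's Lemma 5.3: for block-diagonal matrices `A_l = diag(A_l^1, …, A_l^m)` with
`0 ⪯ A_l^i ⪯ b Iₙ` and a connected-graph Laplacian `L` (symmetric PSD, `L𝟙 = 0`, spectral gap
`lam₂` on the orthogonal complement of `𝟙`),
`λ_min(∑ₗ (A_l + ν L ⊗ Iₙ)) ≥ (ν lam₂ / (m(2b + ν lam₂))) λ_min(∑ᵢ∑ₗ A_l^i)`, where the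
eigenvalue bounds are expressed via the positive semidefinite order. -/
theorem stmt6 (m n h : ℕ) (hm : 0 < m) (hn : 0 < n) (hh : 0 < h)
    (b ν lam₂ : ℝ) (hb : 0 < b) (hν : 0 < ν) (hlam₂ : 0 < lam₂)
    (A : Fin h → Fin m → Matrix (Fin n) (Fin n) ℝ)
    (hA : ∀ l i, (A l i).PosSemidef)
    (hAb : ∀ l i, (b • (1 : Matrix (Fin n) (Fin n) ℝ) - A l i).PosSemidef)
    (L : Matrix (Fin m) (Fin m) ℝ)
    (hL : L.PosSemidef)
    (hL1 : L *ᵥ (fun _ => 1) = 0)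
    (hgap : ∀ x : Fin m → ℝ, x ⬝ᵥ (fun _ => (1 : ℝ)) = 0 →
      lam₂ * (x ⬝ᵥ x) ≤ x ⬝ᵥ (L *ᵥ x)) :
    ∀ t : ℝ,
      ((∑ i, ∑ l, A l i) - t • (1 : Matrix (Fin n) (Fin n) ℝ)).PosSemidef →
      ((∑ l, (Matrix.of (fun p q : Fin m × Fin n =>
            if p.1 = q.1 then A l p.1 p.2 q.2 else 0) +
          ν • (L ⊗ₖ (1 : Matrix (Fin n) (Fin n) ℝ)))) -
        (ν * lam₂ / (m * (2 * b + ν * lam₂)) * t) •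
          (1 : Matrix (Fin m × Fin n) (Fin m × Fin n) ℝ)).PosSemidef := by
  intro t ht
  have : Nonempty (Fin m) := ⟨⟨0, hm⟩⟩
  have : Nonempty (Fin n) := ⟨⟨0, hn⟩⟩
  have hh' : (0 : ℝ) < h := Nat.cast_pos.2 hh
  have hsum : ∑ l, (blockDiagonalFst (A l) + ν • (L ⊗ₖ (1 : Matrix (Fin n) (Fin n) ℝ))) =
      blockDiagonalFst (fun i => ∑ l, A l i) + (h * ν) • (L ⊗ₖ 1) := by
    rw [Finset.sum_add_distrib, ← blockDiagonalFst_sum, Finset.sum_const, Finset.card_univ,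
      Fintype.card_fin, ← Nat.cast_smul_eq_nsmul ℝ, smul_smul, Finset.sum_fn]
  have hcoef : ν * lam₂ / (m * (2 * b + ν * lam₂)) =
      h * ν * lam₂ / (Fintype.card (Fin m) * (2 * (h * b) + h * ν * lam₂)) := by
    rw [Fintype.card_fin]
    field_simp
  have key := posSemidef_blockDiagonalFst_add_smul_kronecker_one_sub (mul_pos hh' hb)
    (mul_pos hh' hν) hlam₂ (M := fun i => ∑ l, A l i)
    (fun i => posSemidef_sum _ fun l _ => hA l i)
    (fun i => by simpa using posSemidef_card_mul_smul_one_sub_sum (hAb · i)) hL hL1 hgap ht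
  rw [hcoef]
  exact hsum ▸ key
end

section
/- Let a > 0 and k₀ ≥ 0 be real numbers and let l ≤ k be positive integers with a ≤ l + k₀. Then ∏_{i=l}^{k} (1 − a/(i + k₀)) ≤ ((l + k₀)/(k + k₀))^a. -/
/-!
Bound each factor by `1 - x ≤ exp (-x)`, so the product is at most `exp (-a ∑ 1/(i + k₀))`.
Since `log (x + 1) - log x ≤ 1/x`, the sum telescopes to at least
`log (k + 1 + k₀) - log (l + k₀) ≥ log ((k + k₀)/(l + k₀))`, and exponentiating gives the power.
-/

open Finset Real

theorem Real.prod_one_sub_le_exp_neg_sum {ι : Type*} (s : Finset ι) {f : ι → ℝ}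
    (hf : ∀ i ∈ s, f i ≤ 1) : ∏ i ∈ s, (1 - f i) ≤ exp (-∑ i ∈ s, f i) := by
  rw [← sum_neg_distrib, exp_sum]
  exact prod_le_prod (fun i hi ↦ sub_nonneg.2 (hf i hi)) fun i _ ↦ one_sub_le_exp_neg _

theorem Real.log_add_one_sub_log_le_inv {x : ℝ} (hx : 0 < x) : log (x + 1) - log x ≤ x⁻¹ := by
  rw [← log_div (by positivity) hx.ne']
  calc log ((x + 1) / x) ≤ (x + 1) / x - 1 := log_le_sub_one_of_pos (by positivity)
    _ = x⁻¹ := by field_simp; ring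

theorem Real.log_sub_log_le_sum_Icc_inv {c : ℝ} {m n : ℕ} (hc : 0 < m + c) (hmn : m ≤ n) :
    log (n + 1 + c) - log (m + c) ≤ ∑ i ∈ Icc m n, ((i : ℝ) + c)⁻¹ := by
  have htelescope := sum_Icc_sub hmn fun i : ℕ ↦ log ((i : ℝ) + c)
  push_cast at htelescope
  rw [← htelescope]
  refine sum_le_sum fun i hi ↦ ?_
  have hi : (m : ℝ) ≤ i := by exact_mod_cast (mem_Icc.1 hi).1
  rw [add_right_comm]
  exact log_add_one_sub_log_le_inv (by linarith)

theorem stmt8_general (a k₀ : ℝ) (ha : 0 < a)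
    (l k : ℕ) (hlk : l ≤ k) (hal : a ≤ (l : ℝ) + k₀) :
    ∏ i ∈ Finset.Icc l k, (1 - a / ((i : ℝ) + k₀)) ≤
      (((l : ℝ) + k₀) / ((k : ℝ) + k₀)) ^ a := by
  have hl₀ : 0 < (l : ℝ) + k₀ := ha.trans_le hal
  have hk : (l : ℝ) + k₀ ≤ k + k₀ := by gcongr
  have hfactor : ∀ i ∈ Icc l k, a / ((i : ℝ) + k₀) ≤ 1 := fun i hi ↦ by
    have hi : (l : ℝ) ≤ i := by exact_mod_cast (mem_Icc.1 hi).1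
    rw [div_le_one (by linarith)]
    linarith
  have hsum : log (k + k₀) - log (l + k₀) ≤ ∑ i ∈ Icc l k, ((i : ℝ) + k₀)⁻¹ :=
    calc log (k + k₀) - log (l + k₀) ≤ log (k + 1 + k₀) - log (l + k₀) := by
          gcongr <;> linarith
      _ ≤ _ := log_sub_log_le_sum_Icc_inv hl₀ hlk
  calc ∏ i ∈ Icc l k, (1 - a / ((i : ℝ) + k₀))
      ≤ exp (-∑ i ∈ Icc l k, a / ((i : ℝ) + k₀)) := prod_one_sub_le_exp_neg_sum _ hfactor
    _ = exp (-(a * ∑ i ∈ Icc l k, ((i : ℝ) + k₀)⁻¹)) := by simp only [mul_sum, div_eq_mul_inv]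
    _ ≤ exp (-(a * (log (k + k₀) - log (l + k₀)))) := by gcongr
    _ = (((l : ℝ) + k₀) / ((k : ℝ) + k₀)) ^ a := by
      rw [rpow_def_of_pos (div_pos hl₀ (by linarith)), log_div hl₀.ne' (by linarith)]
      ring_nf

/-- The `b = 1` case of the paper's Lemma 5.5 (Wang–Ke–Zhang):
`∏_{i=l}^{k} (1 - a/(i + k₀)) ≤ ((l + k₀)/(k + k₀))^a` for `a > 0`, `k₀ ≥ 0`,
`1 ≤ l ≤ k` and `a ≤ l + k₀`. -/
theorem stmt8 (a k₀ : ℝ) (ha : 0 < a) (hk₀ : 0 ≤ k₀)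
    (l k : ℕ) (hl : 0 < l) (hlk : l ≤ k) (hal : a ≤ (l : ℝ) + k₀) :
    ∏ i ∈ Finset.Icc l k, (1 - a / ((i : ℝ) + k₀)) ≤
      (((l : ℝ) + k₀) / ((k : ℝ) + k₀)) ^ a :=
  stmt8_general a k₀ ha l k hlk hal
end

section
/- Let 0 < b < 1, a > 0, and k₀ ≥ 0 be real numbers. Then the sequence S_k = ∑_{l=1}^{k} ( ∏_{i=l}^{k} (1 − a/(i + k₀)^b) ) · (l + k₀)^{−2b} satisfies S_k = O(k^{−b}) as k → ∞; that is, there exist C > 0 and K such that |S_k| ≤ C·k^{−b} for all k ≥ K. -/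
/-!
Peeling off the factor `i = k + 1` gives the recursion `S (k+1) = (1 - A (k+1)) (S k + c (k+1))`
with `A k = a / (k + k₀)^b ≥ a' k^(-b)` for `a' = a / (1 + k₀)^b`, and `|c k| ≤ k^(-2b)`.
The bound `|S k| ≤ C k^(-b)` then propagates by induction as soon as `a' C ≥ 2`: the contraction
removes `a' C k^(-2b)`, which dominates both the perturbation `k^(-2b)` and the loss
`C (k^(-b) - (k+1)^(-b)) = O(k^(-1))`; the latter is `o(k^(-2b))` exactly because `b < 1`.
-/

open Finset Filter Real

theorem sum_Icc_mul_prod_Icc_succ {R : Type*} [CommSemiring R] (f g : ℕ → R) (k : ℕ) :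
    ∑ l ∈ Icc 1 (k + 1), (∏ i ∈ Icc l (k + 1), f i) * g l
      = f (k + 1) * (∑ l ∈ Icc 1 k, (∏ i ∈ Icc l k, f i) * g l + g (k + 1)) := by
  have hprod : ∀ l ∈ Icc 1 k, (∏ i ∈ Icc l (k + 1), f i) * g l
      = f (k + 1) * ((∏ i ∈ Icc l k, f i) * g l) := by
    intro l hl
    rw [prod_Icc_succ_top (by grind)]
    ring
  rw [sum_Icc_succ_top (by omega), sum_congr rfl hprod, ← mul_sum, Icc_self, prod_singleton,
    mul_add]

theorem one_sub_mul_add_le_mul {A a C c v w : ℝ} (hw : 0 ≤ w) (hC : 2 ≤ a * C) (hC0 : 0 ≤ C)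
    (hAw : a * w ≤ A) (hA1 : A ≤ 1) (hc : c ≤ w ^ 2)
    (hv : v ≤ w * (1 + a / 2 * w)) :
    (1 - A) * (C * v + c) ≤ C * w := by
  have ha : 0 ≤ a := by nlinarith
  calc (1 - A) * (C * v + c) ≤ (1 - A) * (C * (w * (1 + a / 2 * w)) + w ^ 2) := by gcongr
    _ ≤ (1 - a * w) * (C * (w * (1 + a / 2 * w)) + w ^ 2) := by gcongr
    _ = C * w - w ^ 2 * (a * C / 2 - 1) - C * w * (a * w) ^ 2 / 2 - a * w ^ 3 := by ring
    _ ≤ C * w := by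
        have : 0 ≤ w ^ 2 * (a * C / 2 - 1) := mul_nonneg (by positivity) (by linarith)
        have : 0 ≤ C * w * (a * w) ^ 2 := by positivity
        have : 0 ≤ a * w ^ 3 := by positivity
        linarith

theorem rpow_neg_le_rpow_neg_add_one_mul {b x : ℝ} (hb : b ≤ 1) (hx : 1 ≤ x) :
    x ^ (-b) ≤ (x + 1) ^ (-b) * (1 + 2 / (x + 1)) := by
  have hx0 : 0 < x := by linarith
  have hratio : ((x + 1) / x) ^ b ≤ 1 + 2 / (x + 1) := calc
    ((x + 1) / x) ^ b ≤ ((x + 1) / x) ^ (1 : ℝ) :=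
        rpow_le_rpow_of_exponent_le ((one_le_div hx0).mpr (by linarith)) hb
    _ ≤ 1 + 2 / (x + 1) := by
        rw [rpow_one, div_le_iff₀ hx0]
        field_simp
        nlinarith
  calc x ^ (-b) = (x + 1) ^ (-b) * ((x + 1) / x) ^ b := by
        rw [div_rpow (by linarith) hx0.le, rpow_neg (x := x + 1) (by linarith), rpow_neg hx0.le]
        field_simp
    _ ≤ (x + 1) ^ (-b) * (1 + 2 / (x + 1)) := by gcongr

theorem eventually_two_div_le_mul_rpow_neg {b ε : ℝ} (hb : b < 1) (hε : 0 < ε) :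
    ∀ᶠ x : ℝ in atTop, 2 / x ≤ ε * x ^ (-b) := by
  filter_upwards [(tendsto_rpow_neg_atTop (sub_pos.mpr hb)).eventually (ge_mem_nhds (half_pos hε)),
    eventually_gt_atTop 0] with x hx hx0
  calc 2 / x = 2 * x ^ (-(1 - b)) * x ^ (-b) := by
        rw [mul_assoc, ← rpow_add hx0, show -(1 - b) + -b = -1 by ring, rpow_neg_one,
          div_eq_mul_inv]
    _ ≤ 2 * (ε / 2) * x ^ (-b) := by gcongr
    _ = ε * x ^ (-b) := by ring

theorem eventually_natCast_rpow_neg_le {b ε : ℝ} (hb : b < 1) (hε : 0 < ε) :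
    ∀ᶠ k : ℕ in atTop,
      (k : ℝ) ^ (-b) ≤ ((k + 1 : ℕ) : ℝ) ^ (-b) * (1 + ε * ((k + 1 : ℕ) : ℝ) ^ (-b)) := by
  have hsucc : Tendsto (fun k : ℕ => ((k + 1 : ℕ) : ℝ)) atTop atTop :=
    tendsto_natCast_atTop_atTop.comp (tendsto_add_atTop_nat 1)
  filter_upwards [hsucc.eventually (eventually_two_div_le_mul_rpow_neg hb hε),
    eventually_ge_atTop 1] with k hk hk1
  push_cast at hk ⊢
  calc (k : ℝ) ^ (-b) ≤ ((k : ℝ) + 1) ^ (-b) * (1 + 2 / ((k : ℝ) + 1)) :=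
        rpow_neg_le_rpow_neg_add_one_mul hb.le (by exact_mod_cast hk1)
    _ ≤ ((k : ℝ) + 1) ^ (-b) * (1 + ε * ((k : ℝ) + 1) ^ (-b)) := by gcongr

theorem exists_abs_le_mul_rpow_neg_of_eq_one_sub_mul {a b : ℝ} (ha : 0 < a) (hb : b < 1)
    {e A c : ℕ → ℝ}
    (hA : ∀ᶠ k : ℕ in atTop, a * (k : ℝ) ^ (-b) ≤ A k ∧ A k ≤ 1)
    (hc : ∀ᶠ k : ℕ in atTop, |c k| ≤ ((k : ℝ) ^ (-b)) ^ 2)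
    (he : ∀ᶠ k in atTop, e (k + 1) = (1 - A (k + 1)) * (e k + c (k + 1))) :
    ∃ C : ℝ, 0 < C ∧ ∃ K : ℕ, ∀ k : ℕ, K ≤ k → |e k| ≤ C * (k : ℝ) ^ (-b) := by
  have hshift := tendsto_add_atTop_nat 1
  obtain ⟨K, hK⟩ := eventually_atTop.mp <|
    (hshift.eventually hA).and <| (hshift.eventually hc).and <| he.and <|
      (eventually_natCast_rpow_neg_le hb (half_pos ha)).and (eventually_ge_atTop 1)
  obtain ⟨-, -, -, -, hK1⟩ := hK K le_rfl
  have hK0 : (0 : ℝ) < (K : ℝ) ^ (-b) := rpow_pos_of_pos (by exact_mod_cast hK1) _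
  set C := max (|e K| / (K : ℝ) ^ (-b)) (2 / a)
  have hC0 : 0 < C := lt_max_of_lt_right (by positivity)
  refine ⟨C, hC0, K, fun k hk => ?_⟩
  induction k, hk using Nat.le_induction with
  | base => exact (div_le_iff₀ hK0).mp (le_max_left _ _)
  | succ k hk ih =>
    obtain ⟨⟨hAlow, hA1⟩, hck, hek, hv, -⟩ := hK k hk
    calc |e (k + 1)| ≤ (1 - A (k + 1)) * (|e k| + |c (k + 1)|) := by
          rw [hek, abs_mul, abs_of_nonneg (sub_nonneg.mpr hA1)]
          gcongr
          exact abs_add_le _ _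
      _ ≤ (1 - A (k + 1)) * (C * (k : ℝ) ^ (-b) + |c (k + 1)|) := by gcongr
      _ ≤ C * ((k + 1 : ℕ) : ℝ) ^ (-b) :=
          one_sub_mul_add_le_mul (by positivity)
            (by rw [← div_le_iff₀' ha]; exact le_max_right _ _) hC0.le hAlow hA1 hck hv

section

variable {a b k₀ x : ℝ}

theorem rpow_add_le_rpow_mul_one_add_rpow (hb : 0 ≤ b) (hk₀ : 0 ≤ k₀) (hx : 1 ≤ x) :
    (x + k₀) ^ b ≤ x ^ b * (1 + k₀) ^ b := by
  rw [← mul_rpow (by linarith) (by linarith)]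
  gcongr
  nlinarith

theorem div_mul_rpow_neg_le_div_rpow_add (ha : 0 ≤ a) (hb : 0 ≤ b) (hk₀ : 0 ≤ k₀) (hx : 1 ≤ x) :
    a / (1 + k₀) ^ b * x ^ (-b) ≤ a / (x + k₀) ^ b := by
  rw [rpow_neg (by linarith), ← div_eq_mul_inv, div_div, mul_comm]
  gcongr
  exact rpow_add_le_rpow_mul_one_add_rpow hb hk₀ hx

theorem abs_rpow_add_neg_two_mul_le (hb : 0 ≤ b) (hk₀ : 0 ≤ k₀) (hx : 0 < x) :
    |(x + k₀) ^ (-(2 * b))| ≤ (x ^ (-b)) ^ 2 := by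
  rw [abs_of_nonneg (by positivity), ← rpow_natCast, ← rpow_mul hx.le]
  push_cast
  rw [show -b * 2 = -(2 * b) by ring]
  exact rpow_le_rpow_of_nonpos hx (by linarith) (by linarith)

end

/-- The second assertion of the paper's Lemma 5.5 (Wang–Ke–Zhang): for `0 < b < 1`, `a > 0`
and `k₀ ≥ 0`, the sums `S_k = ∑_{l=1}^{k} (∏_{i=l}^{k} (1 - a/(i + k₀)^b)) (l + k₀)^{-2b}`
satisfy `S_k = O(k^{-b})`. -/
theorem stmt10 (b a k₀ : ℝ) (hb0 : 0 < b) (hb1 : b < 1) (ha : 0 < a) (hk₀ : 0 ≤ k₀)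
    (S : ℕ → ℝ)
    (hS : ∀ k, S k = ∑ l ∈ Finset.Icc 1 k,
      (∏ i ∈ Finset.Icc l k, (1 - a / ((i : ℝ) + k₀) ^ b)) * ((l : ℝ) + k₀) ^ (-(2 * b))) :
    ∃ C : ℝ, 0 < C ∧ ∃ K : ℕ, ∀ k : ℕ, K ≤ k → |S k| ≤ C * (k : ℝ) ^ (-b) := by
  have hrec (k : ℕ) : S (k + 1) = (1 - a / (((k + 1 : ℕ) : ℝ) + k₀) ^ b)
      * (S k + (((k + 1 : ℕ) : ℝ) + k₀) ^ (-(2 * b))) := by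
    rw [hS, hS, sum_Icc_mul_prod_Icc_succ]
  have hgrowth : Tendsto (fun k : ℕ => ((k : ℝ) + k₀) ^ b) atTop atTop :=
    (tendsto_rpow_atTop hb0).comp (tendsto_atTop_add_const_right _ k₀ tendsto_natCast_atTop_atTop)
  refine exists_abs_le_mul_rpow_neg_of_eq_one_sub_mul (A := fun k => a / ((k : ℝ) + k₀) ^ b)
    (c := fun k => ((k : ℝ) + k₀) ^ (-(2 * b))) (by positivity : 0 < a / (1 + k₀) ^ b) hb1
    ?_ ?_ (.of_forall hrec)
  · filter_upwards [eventually_ge_atTop 1, hgrowth.eventually_ge_atTop a] with k hk hka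
    exact ⟨div_mul_rpow_neg_le_div_rpow_add ha.le hb0.le hk₀ (by exact_mod_cast hk),
      div_le_one_of_le₀ hka (by positivity)⟩
  · filter_upwards [eventually_gt_atTop 0] with k hk
    exact abs_rpow_add_neg_two_mul_le hb0.le hk₀ (by exact_mod_cast hk)
end

section
/- Let a, b be real numbers with a > b > 0. Then the sequence T_k = ∑_{l=1}^{k} ( ∏_{i=l+1}^{k} (1 − a/i) ) · l^{−(1+b)} satisfies T_k = O(k^{−b}) as k → ∞; that is, there exist C > 0 and K such that |T_k| ≤ C·k^{−b} for all k ≥ K. -/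
/-!
The sums obey `T (k+1) = (1 - a/(k+1)) T k + (k+1)^{-(1+b)}`. Since `(1 + 1/k)^b ≤ k/(k-b)`,
the factor `1 - a/(k+1)` shrinks `C k^{-b}` below `C (k+1)^{-b}` by a margin of order
`C (a-b) (k+1)^{-b}/k`, which absorbs the forcing term `(k+1)^{-b}/(k+1)` once `C ≥ 2/(a-b)`
and `k` is large. So the bound `|T k| ≤ C k^{-b}` propagates by induction.
-/

open Finset Real

theorem sum_Icc_prod_Icc_succ {R : Type*} [CommSemiring R] (f g : ℕ → R) (k : ℕ) :
    ∑ l ∈ Icc 1 (k + 1), (∏ i ∈ Icc (l + 1) (k + 1), f i) * g l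
      = f (k + 1) * ∑ l ∈ Icc 1 k, (∏ i ∈ Icc (l + 1) k, f i) * g l + g (k + 1) := by
  rw [sum_Icc_succ_top (by omega), Icc_eq_empty (show ¬k + 1 + 1 ≤ k + 1 by omega), prod_empty, one_mul, mul_sum]
  congr 1
  refine sum_congr rfl fun l hl => ?_
  rw [prod_Icc_succ_top (by grind)]
  ring

theorem one_sub_div_le_div_add_one_rpow {m b : ℝ} (hm : 0 < m) (hb : 0 ≤ b) :
    1 - b / m ≤ (m / (m + 1)) ^ b := by
  have hlog : -(1 / m) ≤ log (m / (m + 1)) := by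
    have := one_sub_inv_le_log_of_pos (x := m / (m + 1)) (by positivity)
    rw [inv_div, show 1 - (m + 1) / m = -(1 / m) by field_simp; ring] at this
    exact this
  calc 1 - b / m = -(1 / m) * b + 1 := by ring
    _ ≤ log (m / (m + 1)) * b + 1 := by gcongr
    _ ≤ (m / (m + 1)) ^ b := (add_one_le_exp _).trans_eq (rpow_def_of_pos (by positivity) b).symm

theorem rpow_neg_le_div_sub_mul_rpow_neg_add_one {m b : ℝ} (hb : 0 ≤ b) (hbm : b < m) :
    m ^ (-b) ≤ m / (m - b) * (m + 1) ^ (-b) := by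
  have hm : 0 < m := hb.trans_lt hbm
  have hsplit : m ^ (-b) = ((m / (m + 1)) ^ b)⁻¹ * (m + 1) ^ (-b) := by
    rw [← rpow_neg (by positivity), ← mul_rpow (by positivity) (by positivity)]
    field_simp
  have hratio : ((m / (m + 1)) ^ b)⁻¹ ≤ m / (m - b) := by
    rw [show m / (m - b) = ((m - b) / m)⁻¹ from (inv_div _ _).symm]
    refine inv_anti₀ (div_pos (sub_pos.2 hbm) hm) ?_
    rw [sub_div, div_self hm.ne']
    exact one_sub_div_le_div_add_one_rpow hm hb
  rw [hsplit]
  gcongr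

theorem one_sub_div_mul_rpow_neg_add_rpow_le {a b C m : ℝ} (hb : 0 ≤ b) (hab : b < a)
    (hC : 2 ≤ C * (a - b)) (ham : a ≤ m) (hbm : 2 * b ≤ (a - b) * m) :
    (1 - a / (m + 1)) * (C * m ^ (-b)) + (m + 1) ^ (-(1 + b)) ≤ C * (m + 1) ^ (-b) := by
  have hm : 0 < m := by linarith
  have hmb : 0 < m - b := by linarith
  have hcontr : 0 ≤ 1 - a / (m + 1) := by
    rw [sub_nonneg, div_le_one (by linarith)]
    linarith
  have hC0 : 0 ≤ C := by nlinarith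
  have hforce : (m + 1) ^ (-(1 + b)) = (m + 1) ^ (-b) / (m + 1) := by
    rw [show -(1 + b) = -b - 1 by ring, rpow_sub_one (by positivity)]
  have hcoef : (1 - a / (m + 1)) * (C * (m / (m - b))) + 1 / (m + 1) ≤ C := by
    rw [← sub_nonneg, show C - ((1 - a / (m + 1)) * (C * (m / (m - b))) + 1 / (m + 1))
        = (C * ((a - b) * m - b) - (m - b)) / ((m + 1) * (m - b)) by field_simp; ring]
    apply div_nonneg _ (by positivity)
    nlinarith [mul_le_mul_of_nonneg_left hbm hC0]
  calc (1 - a / (m + 1)) * (C * m ^ (-b)) + (m + 1) ^ (-(1 + b))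
      ≤ (1 - a / (m + 1)) * (C * (m / (m - b) * (m + 1) ^ (-b))) + (m + 1) ^ (-b) / (m + 1) := by
        rw [hforce]
        gcongr
        exact rpow_neg_le_div_sub_mul_rpow_neg_add_one hb (by linarith)
    _ = ((1 - a / (m + 1)) * (C * (m / (m - b))) + 1 / (m + 1)) * (m + 1) ^ (-b) := by ring
    _ ≤ C * (m + 1) ^ (-b) := by gcongr

theorem le_mul_rpow_neg_of_le_one_sub_div_mul_add {a b C : ℝ} {u : ℕ → ℝ} {K : ℕ}
    (hb : 0 ≤ b) (hab : b < a) (hC : 2 ≤ C * (a - b)) (haK : a ≤ K) (hbK : 2 * b ≤ (a - b) * K)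
    (hu : ∀ k ≥ K, u (k + 1) ≤ (1 - a / (k + 1)) * u k + ((k : ℝ) + 1) ^ (-(1 + b)))
    (hK : u K ≤ C * (K : ℝ) ^ (-b)) :
    ∀ k ≥ K, u k ≤ C * (k : ℝ) ^ (-b) := by
  intro k hk
  induction k, hk using Nat.le_induction with
  | base => exact hK
  | succ k hk ih =>
    have hKk : (K : ℝ) ≤ k := by exact_mod_cast hk
    have hcontr : 0 ≤ 1 - a / ((k : ℝ) + 1) := by
      rw [sub_nonneg, div_le_one (by linarith)]
      linarith
    push_cast
    calc u (k + 1) ≤ (1 - a / (k + 1)) * u k + ((k : ℝ) + 1) ^ (-(1 + b)) := hu k hk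
      _ ≤ (1 - a / (k + 1)) * (C * (k : ℝ) ^ (-b)) + ((k : ℝ) + 1) ^ (-(1 + b)) := by gcongr
      _ ≤ C * ((k : ℝ) + 1) ^ (-b) :=
        one_sub_div_mul_rpow_neg_add_rpow_le hb hab hC (by linarith)
          (hbK.trans (by gcongr))

/-- The case `a > b` of the paper's Lemma 5.6 (Zhang–Wang–Zhao): for `a > b > 0`, the sums
`T_k = ∑_{l=1}^{k} (∏_{i=l+1}^{k} (1 - a/i)) l^{-(1+b)}` satisfy `T_k = O(k^{-b})`. -/
theorem stmt11 (a b : ℝ) (hb : 0 < b) (hab : b < a)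
    (T : ℕ → ℝ)
    (hT : ∀ k, T k = ∑ l ∈ Finset.Icc 1 k,
      (∏ i ∈ Finset.Icc (l + 1) k, (1 - a / (i : ℝ))) * (l : ℝ) ^ (-(1 + b))) :
    ∃ C : ℝ, 0 < C ∧ ∃ K : ℕ, ∀ k : ℕ, K ≤ k → |T k| ≤ C * (k : ℝ) ^ (-b) := by
  have hab' : 0 < a - b := sub_pos.2 hab
  have hrec (k : ℕ) : T (k + 1) = (1 - a / ((k : ℝ) + 1)) * T k + ((k : ℝ) + 1) ^ (-(1 + b)) := by
    rw [hT, hT]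
    exact (sum_Icc_prod_Icc_succ (fun i : ℕ => 1 - a / (i : ℝ))
      (fun l : ℕ => (l : ℝ) ^ (-(1 + b))) k).trans (by push_cast; ring)
  obtain ⟨K, hK⟩ := exists_nat_ge (max a (2 * b / (a - b)))
  have haK : a ≤ K := (le_max_left _ _).trans hK
  have hbK : 2 * b ≤ (a - b) * K := by
    have := (div_le_iff₀ hab').1 ((le_max_right _ _).trans hK)
    linarith
  have hK0 : (0 : ℝ) < K := by linarith
  set C := max (2 / (a - b)) (|T K| * (K : ℝ) ^ b)
  refine ⟨C, (by positivity : 0 < 2 / (a - b)).trans_le (le_max_left _ _), K,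
    le_mul_rpow_neg_of_le_one_sub_div_mul_add hb.le hab ?_ haK hbK (fun k hk => ?_) ?_⟩
  · exact (div_le_iff₀ hab').1 (le_max_left _ _)
  · have hcontr : 0 ≤ 1 - a / ((k : ℝ) + 1) := by
      rw [sub_nonneg, div_le_one (by positivity)]
      linarith [(Nat.cast_le (α := ℝ)).2 hk]
    rw [hrec]
    refine (abs_add_le _ _).trans_eq ?_
    rw [abs_mul, abs_of_nonneg hcontr, abs_of_nonneg (rpow_nonneg (by positivity) _)]
  · rw [rpow_neg hK0.le, ← div_eq_mul_inv, le_div_iff₀ (by positivity)]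
    exact le_max_right _ _
end

section
/- Let g, π, δ, c, β, f, φ, N, λ, σ, γ be positive real numbers, and define w₁ = 2γgπδ²/c − β(f²φ⁴σ/c + 2N + σλ²/c), w₂ = −2βcN/σ, and w₃ = 3βσ/(2c). If γ > (β/(2gπδ²))·( 2cN + σ(f²φ⁴ + λ²) + 8c⁴N²/(3σ³) ), then w₁ > 0, w₁w₃ > w₂², and consequently the smallest eigenvalue of the symmetric 2×2 matrix W = [[w₁, w₂],[w₂, w₃]], namely λ_min(W) = ( (w₁ + w₃) − √((w₁ − w₃)² + 4w₂²) ) / 2, is strictly positive. -/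
/-!
The condition on `γ` says exactly that `w₁` exceeds `βM` with `M = 8c³N²/(3σ³)`, and `M` is
chosen so that `βM w₃ = w₂²`; hence `w₁ w₃ > w₂²`. A symmetric `2 × 2` matrix with positive diagonal entry
and positive determinant has positive smallest eigenvalue, since then
`(w₁ - w₃)² + 4w₂² < (w₁ + w₃)²`.
-/

theorem sub_sqrt_discrim_pos_of_sq_lt_mul {a b d : ℝ} (ha : 0 < a) (hdet : b ^ 2 < a * d) :
    0 < ((a + d) - Real.sqrt ((a - d) ^ 2 + 4 * b ^ 2)) / 2 := by
  have hd : 0 < d := pos_of_mul_pos_right ((sq_nonneg b).trans_lt hdet) ha.le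
  have hsqrt : Real.sqrt ((a - d) ^ 2 + 4 * b ^ 2) < a + d :=
    (Real.sqrt_lt' (by linarith)).mpr (by nlinarith)
  linarith

theorem mul_lt_div_of_gt_div_mul {A c β γ K M : ℝ} (hA : 0 < A) (hc : 0 < c)
    (h : γ > β / A * (K + c * M)) : β * M < (γ * A - β * K) / c := by
  rw [gt_iff_lt, div_mul_eq_mul_div, div_lt_iff₀ hA] at h
  rw [lt_div_iff₀ hc]
  linarith

theorem stmt12_general (g π δ c β f φ N lam σ γ : ℝ)
    (hg : 0 < g) (hπ : 0 < π) (hδ : 0 < δ) (hc : 0 < c) (hβ : 0 < β)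
    (hσ : 0 < σ)
    (w₁ w₂ w₃ : ℝ)
    (hw₁ : w₁ = 2 * γ * g * π * δ ^ 2 / c - β * (f ^ 2 * φ ^ 4 * σ / c + 2 * N + σ * lam ^ 2 / c))
    (hw₂ : w₂ = -(2 * β * c * N / σ))
    (hw₃ : w₃ = 3 * β * σ / (2 * c))
    (hγ : γ > β / (2 * g * π * δ ^ 2) *
      (2 * c * N + σ * (f ^ 2 * φ ^ 4 + lam ^ 2) + 8 * c ^ 4 * N ^ 2 / (3 * σ ^ 3))) :
    0 < w₁ ∧ w₂ ^ 2 < w₁ * w₃ ∧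
      0 < ((w₁ + w₃) - Real.sqrt ((w₁ - w₃) ^ 2 + 4 * w₂ ^ 2)) / 2 := by
  set M := 8 * c ^ 3 * N ^ 2 / (3 * σ ^ 3) with hMdef
  have hM : 0 ≤ M := by positivity
  have hw₃pos : 0 < w₃ := by rw [hw₃]; positivity
  have hmargin : β * M < w₁ := by
    have hK : 2 * c * N + σ * (f ^ 2 * φ ^ 4 + lam ^ 2) + 8 * c ^ 4 * N ^ 2 / (3 * σ ^ 3)
        = (f ^ 2 * φ ^ 4 * σ + 2 * c * N + σ * lam ^ 2) + c * M := by ring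
    convert mul_lt_div_of_gt_div_mul (by positivity) hc (hK ▸ hγ) using 1
    rw [hw₁]
    field_simp
  have hw₂sq : w₂ ^ 2 = β * M * w₃ := by
    rw [hw₂, hw₃, hMdef]
    field_simp
    ring
  have hw₁pos : 0 < w₁ := (mul_nonneg hβ.le hM).trans_lt hmargin
  have hdet : w₂ ^ 2 < w₁ * w₃ := hw₂sq ▸ mul_lt_mul_of_pos_right hmargin hw₃pos
  exact ⟨hw₁pos, hdet, sub_sqrt_discrim_pos_of_sq_lt_mul hw₁pos hdet⟩

/-- The algebraic core of the proof of the paper's Theorem 1: the step-coefficient condition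
on `γ` guarantees `w₁ > 0`, `w₁ w₃ > w₂²`, and hence positivity of the smallest eigenvalue
`((w₁ + w₃) - √((w₁ - w₃)² + 4 w₂²))/2` of the symmetric matrix `W = [[w₁, w₂], [w₂, w₃]]`. -/
theorem stmt12 (g π δ c β f φ N lam σ γ : ℝ)
    (hg : 0 < g) (hπ : 0 < π) (hδ : 0 < δ) (hc : 0 < c) (hβ : 0 < β) (hf : 0 < f)
    (hφ : 0 < φ) (hN : 0 < N) (hlam : 0 < lam) (hσ : 0 < σ) (hγpos : 0 < γ)
    (w₁ w₂ w₃ : ℝ)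
    (hw₁ : w₁ = 2 * γ * g * π * δ ^ 2 / c - β * (f ^ 2 * φ ^ 4 * σ / c + 2 * N + σ * lam ^ 2 / c))
    (hw₂ : w₂ = -(2 * β * c * N / σ))
    (hw₃ : w₃ = 3 * β * σ / (2 * c))
    (hγ : γ > β / (2 * g * π * δ ^ 2) *
      (2 * c * N + σ * (f ^ 2 * φ ^ 4 + lam ^ 2) + 8 * c ^ 4 * N ^ 2 / (3 * σ ^ 3))) :
    0 < w₁ ∧ w₂ ^ 2 < w₁ * w₃ ∧
      0 < ((w₁ + w₃) - Real.sqrt ((w₁ - w₃) ^ 2 + 4 * w₂ ^ 2)) / 2 :=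
  stmt12_general g π δ c β f φ N lam σ γ hg hπ hδ hc hβ hσ w₁ w₂ w₃ hw₁ hw₂ hw₃ hγ
end

section
/- Let g, π, δ, c, β, f, φ, N, λ, σ, γ be positive real numbers with β > 2c/(3σ), and define w₁ = 2γgπδ²/c − β(f²φ⁴σ/c + 2N + σλ²/c), w₂ = −2βcN/σ, and w₃ = 3βσ/(2c). If γ > (β/(2gπδ²))·( 2cN + σ(f²φ⁴ + λ²) + 8βc⁴N²/(σ²(3βσ − 2c)) + c/β ), then w₃ > 1, (w₁ − 1)(w₃ − 1) > w₂², and consequently λ_min(W) = ( (w₁ + w₃) − √((w₁ − w₃)² + 4w₂²) ) / 2 > 1, where W = [[w₁, w₂],[w₂, w₃]]. -/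
/-!
With `A = 3βσ - 2c > 0` one has `w₃ - 1 = A/(2c)` and `w₂² = M (w₃ - 1)` for
`M = 8β²c³N²/(σ²A)`, while the condition on `γ` says exactly `w₁ - 1 > M`; multiplying gives
`(w₁ - 1)(w₃ - 1) > w₂²`. For a symmetric `2 × 2` matrix, `w₃ > t` and `(w₁ - t)(w₃ - t) > w₂²`
say that `W - t I` is positive definite, i.e. that the smaller eigenvalue exceeds `t`.
-/

theorem lt_symm2_min_eigenvalue {t a b d : ℝ} (hb : t < b) (hdet : d ^ 2 < (a - t) * (b - t)) :
    t < ((a + b) - Real.sqrt ((a - b) ^ 2 + 4 * d ^ 2)) / 2 := by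
  have ha : t < a := by
    by_contra! ha
    nlinarith [sq_nonneg d, mul_nonpos_of_nonpos_of_nonneg (sub_nonpos.mpr ha) (sub_pos.mpr hb).le]
  have hdisc : (a - b) ^ 2 + 4 * d ^ 2 < (a + b - 2 * t) ^ 2 := by nlinarith
  have hsqrt : Real.sqrt ((a - b) ^ 2 + 4 * d ^ 2) < a + b - 2 * t :=
    (Real.sqrt_lt' (by linarith)).mpr hdisc
  linarith

theorem stmt13_general (g π δ c β f φ N lam σ γ : ℝ)
    (hg : 0 < g) (hπ : 0 < π) (hδ : 0 < δ) (hc : 0 < c) (hβ : 0 < β)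
    (hσ : 0 < σ)
    (hβσ : β > 2 * c / (3 * σ))
    (w₁ w₂ w₃ : ℝ)
    (hw₁ : w₁ = 2 * γ * g * π * δ ^ 2 / c - β * (f ^ 2 * φ ^ 4 * σ / c + 2 * N + σ * lam ^ 2 / c))
    (hw₂ : w₂ = -(2 * β * c * N / σ))
    (hw₃ : w₃ = 3 * β * σ / (2 * c))
    (hγ : γ > β / (2 * g * π * δ ^ 2) *
      (2 * c * N + σ * (f ^ 2 * φ ^ 4 + lam ^ 2) +
        8 * β * c ^ 4 * N ^ 2 / (σ ^ 2 * (3 * β * σ - 2 * c)) + c / β)) :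
    1 < w₃ ∧ w₂ ^ 2 < (w₁ - 1) * (w₃ - 1) ∧
      1 < ((w₁ + w₃) - Real.sqrt ((w₁ - w₃) ^ 2 + 4 * w₂ ^ 2)) / 2 := by
  have hA : 0 < 3 * β * σ - 2 * c := by
    rw [gt_iff_lt, div_lt_iff₀ (by positivity)] at hβσ
    linarith
  have hw₃' : w₃ - 1 = (3 * β * σ - 2 * c) / (2 * c) := by
    rw [hw₃]
    field_simp
  have h₃ : 1 < w₃ := by
    have : 0 < (3 * β * σ - 2 * c) / (2 * c) := by positivity
    linarith
  -- `field_simp` normalises `3βσ - 2c` and then no longer sees it is nonzero, so make it an atom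
  generalize 3 * β * σ - 2 * c = A at hA hw₃' hγ
  set M := 8 * β ^ 2 * c ^ 3 * N ^ 2 / (σ ^ 2 * A) with hM
  have hMw₂ : M * (w₃ - 1) = w₂ ^ 2 := by
    rw [hw₃', hw₂, hM]
    field_simp
    ring
  set X := 2 * c * N + σ * (f ^ 2 * φ ^ 4 + lam ^ 2) +
    8 * β * c ^ 4 * N ^ 2 / (σ ^ 2 * A) + c / β with hX
  have hγX : c * (w₁ - 1 - M) = 2 * g * π * δ ^ 2 * γ - β * X := by
    rw [hw₁, hM, hX]
    field_simp
    ring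
  have h₁ : M < w₁ - 1 := by
    rw [gt_iff_lt, div_mul_eq_mul_div, div_lt_iff₀ (by positivity)] at hγ
    have : 0 < c * (w₁ - 1 - M) := by linarith
    linarith [pos_of_mul_pos_right this hc.le]
  have h₂ : w₂ ^ 2 < (w₁ - 1) * (w₃ - 1) :=
    hMw₂ ▸ mul_lt_mul_of_pos_right h₁ (sub_pos.mpr h₃)
  exact ⟨h₃, h₂, lt_symm2_min_eigenvalue h₃ h₂⟩

/-- The algebraic core of the proof of the paper's Theorem 2 (case `b_k = 1/k`): with
`β > 2c/(3σ)`, the stated condition on `γ` forces `w₃ > 1`, `(w₁ - 1)(w₃ - 1) > w₂²`, and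
hence the smallest eigenvalue `((w₁ + w₃) - √((w₁ - w₃)² + 4 w₂²))/2` of
`W = [[w₁, w₂], [w₂, w₃]]` exceeds `1`. -/
theorem stmt13 (g π δ c β f φ N lam σ γ : ℝ)
    (hg : 0 < g) (hπ : 0 < π) (hδ : 0 < δ) (hc : 0 < c) (hβ : 0 < β) (hf : 0 < f)
    (hφ : 0 < φ) (hN : 0 < N) (hlam : 0 < lam) (hσ : 0 < σ) (hγpos : 0 < γ)
    (hβσ : β > 2 * c / (3 * σ))
    (w₁ w₂ w₃ : ℝ)
    (hw₁ : w₁ = 2 * γ * g * π * δ ^ 2 / c - β * (f ^ 2 * φ ^ 4 * σ / c + 2 * N + σ * lam ^ 2 / c))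
    (hw₂ : w₂ = -(2 * β * c * N / σ))
    (hw₃ : w₃ = 3 * β * σ / (2 * c))
    (hγ : γ > β / (2 * g * π * δ ^ 2) *
      (2 * c * N + σ * (f ^ 2 * φ ^ 4 + lam ^ 2) +
        8 * β * c ^ 4 * N ^ 2 / (σ ^ 2 * (3 * β * σ - 2 * c)) + c / β)) :
    1 < w₃ ∧ w₂ ^ 2 < (w₁ - 1) * (w₃ - 1) ∧
      1 < ((w₁ + w₃) - Real.sqrt ((w₁ - w₃) ^ 2 + 4 * w₂ ^ 2)) / 2 :=
  stmt13_general g π δ c β f φ N lam σ γ hg hπ hδ hc hβ hσ hβσ w₁ w₂ w₃ hw₁ hw₂ hw₃ hγ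
end

section
/- Let h ≥ 1 be an integer, let (b_k)_{k≥1} be a sequence of positive reals with b_k → 0 and ∑_{k=1}^∞ b_k = ∞, and set s_k = b_{k−h+1} + b_{k−h+2} + ⋯ + b_k for k > h. Let w₁ > 0, w₃ > 0, and w₂ ≤ 0 satisfy w₁w₃ > w₂². Suppose (U_k)_{k≥0} and (V_k)_{k≥0} are nonnegative real sequences and there exist K ≥ h and C ≥ 0 such that for all k > K: U_k ≤ (1 − w₁ s_k) U_{k−h} + |w₂| s_k V_{k−h} + C b_k² and V_k ≤ (1 − w₃ s_k) V_{k−h} + |w₂| s_k U_{k−h} + C b_k². Then U_k → 0 and V_k → 0 as k → ∞. -/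
/-!
With `a = |w₂|`, the weights in `W = (w₃ + a) U + (w₁ + a) V` make the cross terms cancel: one
step of the recursion lowers `W` by `s_k (w₁ w₃ - a²) (U + V)`, which is at least `γ s_k W` for a
fixed `γ > 0`, so `W_k ≤ (1 - γ s_k) W_{k-h} + C' b_k²`. Along each residue class modulo `h` this
is the one-step recursion `x_{n+1} ≤ (1 - t_n) x_n + t_n e_n` with `t = γ s`,
`e = C' b² / (γ s) = O(b) → 0` and `∑ t_n = ∞` because the windows `s_k` tile the chain; its
solutions tend to zero because `∏ (1 - t_n) ≤ exp (-∑ t_n) → 0`.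
-/

open Filter Finset Topology

theorem tendsto_zero_of_le_one_sub_mul_add_mul {x t e : ℕ → ℝ} (hx : ∀ n, 0 ≤ x n)
    (ht₀ : ∀ n, 0 ≤ t n) (ht₁ : ∀ n, t n ≤ 1) (he : Tendsto e atTop (𝓝 0))
    (ht : Tendsto (fun n => ∑ i ∈ range n, t i) atTop atTop)
    (hrec : ∀ n, x (n + 1) ≤ (1 - t n) * x n + t n * e n) :
    Tendsto x atTop (𝓝 0) := by
  refine tendsto_order.2 ⟨fun a ha => .of_forall fun n => ha.trans_le (hx n), fun ε hε => ?_⟩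
  obtain ⟨N, hN⟩ := eventually_atTop.1 (he.eventually_lt_const (half_pos hε))
  -- below the threshold `ε / 2` the excess `x n - ε / 2` contracts by `1 - t n ≤ exp (-t n)`
  have hdecay : ∀ n, N ≤ n → x n - ε / 2 ≤ x N * Real.exp (-∑ i ∈ Ico N n, t i) := by
    intro n hn
    induction n, hn using Nat.le_induction with
    | base => simp only [Ico_self, sum_empty, neg_zero, Real.exp_zero, mul_one]; linarith
    | succ n hn ih =>
      have hexp : 1 - t n ≤ Real.exp (-t n) := by linarith [Real.add_one_le_exp (-t n)]
      have hpos : 0 ≤ x N * Real.exp (-∑ i ∈ Ico N n, t i) := by positivity [hx N]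
      calc x (n + 1) - ε / 2 ≤ (1 - t n) * (x n - ε / 2) := by
            nlinarith [hrec n, mul_le_mul_of_nonneg_left (hN n hn).le (ht₀ n)]
        _ ≤ Real.exp (-t n) * (x N * Real.exp (-∑ i ∈ Ico N n, t i)) :=
            (mul_le_mul_of_nonneg_left ih (by linarith [ht₁ n])).trans
              (mul_le_mul_of_nonneg_right hexp hpos)
        _ = x N * Real.exp (-∑ i ∈ Ico N (n + 1), t i) := by
            rw [sum_Ico_succ_top hn, neg_add, Real.exp_add]; ring
  have htail : Tendsto (fun n => ∑ i ∈ Ico N n, t i) atTop atTop := by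
    refine (tendsto_atTop_add_const_right _ (-∑ i ∈ range N, t i) ht).congr' ?_
    filter_upwards [eventually_ge_atTop N] with n hn
    rw [sum_Ico_eq_sub _ hn, sub_eq_add_neg]
  have hsmall : Tendsto (fun n => x N * Real.exp (-∑ i ∈ Ico N n, t i)) atTop (𝓝 0) := by
    simpa using (Real.tendsto_exp_atBot.comp (tendsto_neg_atTop_atBot.comp htail)).const_mul (x N)
  filter_upwards [eventually_ge_atTop N, hsmall.eventually_lt_const (half_pos hε)]
    with n hn hn'
  linarith [hdecay n hn]

theorem tendsto_of_forall_tendsto_add_mul {α : Type*} {f : ℕ → α} {l : Filter α} {h : ℕ}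
    (hh : 0 < h) (hf : ∀ r < h, Tendsto (fun n => f (r + n * h)) atTop l) :
    Tendsto f atTop l := by
  refine fun S hS => show ∀ᶠ k in atTop, f k ∈ S from ?_
  have hall : ∀ᶠ n in atTop, ∀ r ∈ range h, f (r + n * h) ∈ S :=
    (eventually_all_finset _).2 fun r hr => hf r (mem_range.1 hr) hS
  obtain ⟨N, hN⟩ := eventually_atTop.1 hall
  filter_upwards [eventually_ge_atTop (N * h)] with k hk
  simpa [Nat.mod_add_div'] using
    hN (k / h) ((Nat.le_div_iff_mul_le hh).2 hk) (k % h) (mem_range.2 (Nat.mod_lt k hh))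

theorem tendsto_zero_of_le_one_sub_mul_add_mul_of_period {h : ℕ} (hh : 0 < h) {x t e : ℕ → ℝ}
    (hx : ∀ n, 0 ≤ x n) (ht : ∀ᶠ k in atTop, 0 ≤ t k ∧ t k ≤ 1)
    (he : Tendsto e atTop (𝓝 0))
    (hdiv : ∀ᶠ m in atTop, Tendsto (fun N => ∑ n ∈ range N, t (m + (n + 1) * h)) atTop atTop)
    (hrec : ∀ᶠ k in atTop, x (k + h) ≤ (1 - t (k + h)) * x k + t (k + h) * e (k + h)) :
    Tendsto x atTop (𝓝 0) := by
  obtain ⟨M, hM⟩ := eventually_atTop.1 ((ht.and hrec).and hdiv)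
  have hchain : ∀ m, M ≤ m → Tendsto (fun n => x (m + n * h)) atTop (𝓝 0) := by
    intro m hm
    have hle : ∀ n, M ≤ m + (n + 1) * h := fun n => hm.trans (Nat.le_add_right _ _)
    refine tendsto_zero_of_le_one_sub_mul_add_mul (t := fun n => t (m + (n + 1) * h))
      (e := fun n => e (m + (n + 1) * h)) (fun n => hx _) (fun n => (hM _ (hle n)).1.1.1)
      (fun n => (hM _ (hle n)).1.1.2) (he.comp ?_) (hM m hm).2 fun n => ?_
    · exact tendsto_atTop_mono (fun n => (Nat.le_succ n).trans
        ((Nat.le_mul_of_pos_right _ hh).trans (Nat.le_add_left _ _))) tendsto_id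
    · have := (hM (m + n * h) (hm.trans (Nat.le_add_right _ _))).1.2
      rwa [add_assoc, ← add_one_mul] at this
  refine tendsto_of_forall_tendsto_add_mul hh fun r _ => ?_
  rw [← tendsto_add_atTop_iff_nat M]
  convert hchain (r + M * h) (by nlinarith) using 3
  ring

theorem tendsto_sum_Icc_sub_add_one {M : Type*} [AddCommMonoid M] [TopologicalSpace M]
    [ContinuousAdd M] {b : ℕ → M} (hb : Tendsto b atTop (𝓝 0)) (h : ℕ) :
    Tendsto (fun k => ∑ j ∈ Icc (k - h + 1) k, b j) atTop (𝓝 0) := by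
  have hterms : Tendsto (fun k => ∑ i ∈ range h, b (k - h + 1 + i)) atTop (𝓝 0) := by
    simpa using tendsto_finsetSum (range h) fun i _ =>
      hb.comp (tendsto_atTop_mono (fun k => by omega) (tendsto_sub_atTop_nat h))
  refine hterms.congr' ?_
  filter_upwards [eventually_ge_atTop h] with k hk
  rw [← Ico_add_one_right_eq_Icc, sum_Ico_eq_sum_range, show k + 1 - (k - h + 1) = h by omega]

theorem sum_Icc_add_one_eq_sub {G : Type*} [AddCommGroup G] (b : ℕ → G) {m n : ℕ} (hmn : m ≤ n) :
    ∑ j ∈ Icc (m + 1) n, b j = ∑ j ∈ Icc 1 n, b j - ∑ j ∈ Icc 1 m, b j := by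
  have hIcc : ∀ n, Icc 1 n = Ioc 0 n := Icc_add_one_left_eq_Ioc 0
  rw [eq_sub_iff_add_eq', hIcc, hIcc, Icc_add_one_left_eq_Ioc,
    sum_Ioc_consecutive _ (Nat.zero_le m) hmn]

theorem sum_range_window_eq_sub {G : Type*} [AddCommGroup G] {h : ℕ} {b s : ℕ → G}
    (hs : ∀ k, h < k → s k = ∑ j ∈ Icc (k - h + 1) k, b j) {m : ℕ} (hm : 1 ≤ m) (N : ℕ) :
    ∑ n ∈ range N, s (m + (n + 1) * h) = ∑ j ∈ Icc 1 (m + N * h), b j - ∑ j ∈ Icc 1 m, b j := by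
  have hstep : ∀ n, s (m + (n + 1) * h) =
      ∑ j ∈ Icc 1 (m + (n + 1) * h), b j - ∑ j ∈ Icc 1 (m + n * h), b j := by
    intro n
    rw [hs _ (by nlinarith), ← sum_Icc_add_one_eq_sub _ (by nlinarith)]
    congr 3
    rw [add_one_mul, ← add_assoc, Nat.add_sub_cancel]
  simpa [hstep] using sum_range_sub (fun n => ∑ j ∈ Icc 1 (m + n * h), b j) N

theorem self_le_sum_Icc_sub_add_one {b : ℕ → ℝ} (hb : ∀ k, 1 ≤ k → 0 ≤ b k) {h : ℕ} (hh : 1 ≤ h)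
    {k : ℕ} (hk : 1 ≤ k) : b k ≤ ∑ j ∈ Icc (k - h + 1) k, b j :=
  single_le_sum (fun j hj => hb j ((Nat.le_add_left 1 _).trans (mem_Icc.1 hj).1))
    (mem_Icc.2 ⟨by omega, le_rfl⟩)

theorem tendsto_zero_of_le_one_sub_mul_sum_Icc {h : ℕ} (hh : 1 ≤ h) {b s W : ℕ → ℝ}
    (hbpos : ∀ k, 1 ≤ k → 0 < b k) (hb0 : Tendsto b atTop (𝓝 0))
    (hbdiv : Tendsto (fun n => ∑ k ∈ Icc 1 n, b k) atTop atTop)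
    (hs : ∀ k, h < k → s k = ∑ j ∈ Icc (k - h + 1) k, b j) {γ C : ℝ} (hγ : 0 < γ)
    (hW : ∀ k, 0 ≤ W k) (hrec : ∀ᶠ k in atTop, W k ≤ (1 - γ * s k) * W (k - h) + C * b k ^ 2) :
    Tendsto W atTop (𝓝 0) := by
  have hbs : ∀ k, h < k → b k ≤ s k := fun k hk =>
    (hs k hk).symm ▸ self_le_sum_Icc_sub_add_one (fun j hj => (hbpos j hj).le) hh (by omega)
  have hspos : ∀ k, h < k → 0 < s k := fun k hk => (hbpos k (by omega)).trans_le (hbs k hk)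
  have hs0 : Tendsto (fun k => γ * s k) atTop (𝓝 0) := by
    have hwin := (tendsto_sum_Icc_sub_add_one hb0 h).const_mul γ
    rw [mul_zero] at hwin
    refine hwin.congr' ?_
    filter_upwards [eventually_gt_atTop h] with k hk
    rw [hs k hk]
  refine tendsto_zero_of_le_one_sub_mul_add_mul_of_period hh (t := fun k => γ * s k)
    (e := fun k => C * b k ^ 2 / (γ * s k)) hW ?_ ?_ ?_ ?_
  · filter_upwards [eventually_gt_atTop h, hs0.eventually_le_const one_pos] with k hk hk'
    exact ⟨(mul_pos hγ (hspos k hk)).le, hk'⟩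
  · refine squeeze_zero_norm' ?_ (by simpa using hb0.const_mul (|C| / γ))
    filter_upwards [eventually_gt_atTop h] with k hk
    have hbk := hbpos k (by omega)
    calc ‖C * b k ^ 2 / (γ * s k)‖ = |C| * b k ^ 2 / (γ * s k) := by
          rw [Real.norm_eq_abs, abs_div, abs_mul, abs_of_pos (mul_pos hγ (hspos k hk)), abs_sq]
      _ ≤ |C| * (b k * s k) / (γ * s k) := by
          refine div_le_div_of_nonneg_right ?_ (mul_pos hγ (hspos k hk)).le
          rw [sq]
          exact mul_le_mul_of_nonneg_left (mul_le_mul_of_nonneg_left (hbs k hk) hbk.le)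
            (abs_nonneg C)
      _ = |C| / γ * b k := by
          field_simp [(hspos k hk).ne']
  · filter_upwards [eventually_ge_atTop 1] with m hm
    simp only [← mul_sum, sum_range_window_eq_sub hs hm]
    refine Tendsto.const_mul_atTop hγ (tendsto_atTop_add_const_right _ _ (hbdiv.comp ?_))
    exact tendsto_atTop_mono (fun N => (Nat.le_mul_of_pos_right N hh).trans (Nat.le_add_left _ _))
      tendsto_id
  · filter_upwards [(tendsto_add_atTop_nat h).eventually hrec, eventually_ge_atTop 1] with k hk hk1
    rw [Nat.add_sub_cancel] at hk
    rwa [mul_div_cancel₀ _ (mul_pos hγ (hspos _ (by omega))).ne']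

theorem weighted_add_le_one_sub_mul_of_coupled {w₁ w₃ a s u v u' v' c : ℝ} (hw₁ : 0 < w₁)
    (hw₃ : 0 < w₃) (ha : 0 ≤ a) (hdet : a ^ 2 ≤ w₁ * w₃) (hs : 0 ≤ s) (hu' : 0 ≤ u')
    (hv' : 0 ≤ v') (hu : u ≤ (1 - w₁ * s) * u' + a * s * v' + c)
    (hv : v ≤ (1 - w₃ * s) * v' + a * s * u' + c) :
    (w₃ + a) * u + (w₁ + a) * v ≤
      (1 - (w₁ * w₃ - a ^ 2) / (w₁ + w₃ + a) * s) * ((w₃ + a) * u' + (w₁ + a) * v') +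
        (w₁ + w₃ + 2 * a) * c := by
  have hdrop : (w₃ + a) * u + (w₁ + a) * v ≤ (w₃ + a) * u' + (w₁ + a) * v' -
      s * (w₁ * w₃ - a ^ 2) * (u' + v') + (w₁ + w₃ + 2 * a) * c := by
    nlinarith [mul_le_mul_of_nonneg_left hu (by linarith : 0 ≤ w₃ + a),
      mul_le_mul_of_nonneg_left hv (by linarith : 0 ≤ w₁ + a)]
  have hweight : (w₁ * w₃ - a ^ 2) / (w₁ + w₃ + a) * ((w₃ + a) * u' + (w₁ + a) * v') ≤
      (w₁ * w₃ - a ^ 2) * (u' + v') := by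
    rw [div_mul_eq_mul_div, div_le_iff₀ (by linarith), mul_assoc]
    exact mul_le_mul_of_nonneg_left
      (by nlinarith [mul_nonneg hw₁.le hu', mul_nonneg hw₃.le hv']) (sub_nonneg.2 hdet)
  linear_combination hdrop + mul_le_mul_of_nonneg_left hweight hs

theorem stmt14_general (h : ℕ) (hh : 1 ≤ h)
    (b : ℕ → ℝ) (hbpos : ∀ k, 1 ≤ k → 0 < b k)
    (hb0 : Tendsto b atTop (nhds 0))
    (hbdiv : Tendsto (fun n => ∑ k ∈ Finset.Icc 1 n, b k) atTop atTop)
    (s : ℕ → ℝ) (hs : ∀ k, h < k → s k = ∑ j ∈ Finset.Icc (k - h + 1) k, b j)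
    (w₁ w₂ w₃ : ℝ) (hw₁ : 0 < w₁) (hw₃ : 0 < w₃)
    (hdet : w₂ ^ 2 < w₁ * w₃)
    (U V : ℕ → ℝ) (hU : ∀ k, 0 ≤ U k) (hV : ∀ k, 0 ≤ V k)
    (K : ℕ) (C : ℝ)
    (hrecU : ∀ k, K < k →
      U k ≤ (1 - w₁ * s k) * U (k - h) + |w₂| * s k * V (k - h) + C * (b k) ^ 2)
    (hrecV : ∀ k, K < k →
      V k ≤ (1 - w₃ * s k) * V (k - h) + |w₂| * s k * U (k - h) + C * (b k) ^ 2) :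
    Tendsto U atTop (nhds 0) ∧ Tendsto V atTop (nhds 0) := by
  have hdet' : |w₂| ^ 2 < w₁ * w₃ := by rwa [sq_abs]
  have ha := abs_nonneg w₂
  have hW : Tendsto (fun k => (w₃ + |w₂|) * U k + (w₁ + |w₂|) * V k) atTop (𝓝 0) := by
    refine tendsto_zero_of_le_one_sub_mul_sum_Icc hh hbpos hb0 hbdiv hs
      (γ := (w₁ * w₃ - |w₂| ^ 2) / (w₁ + w₃ + |w₂|)) (C := (w₁ + w₃ + 2 * |w₂|) * C)
      (div_pos (sub_pos.2 hdet') (by positivity)) (fun k => by positivity [hU k, hV k]) ?_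
    filter_upwards [eventually_gt_atTop K, eventually_gt_atTop h] with k hkK hkh
    have hsk : 0 ≤ s k := (hs k hkh).symm ▸ (hbpos k (by omega)).le.trans
      (self_le_sum_Icc_sub_add_one (fun j hj => (hbpos j hj).le) hh (by omega))
    exact weighted_add_le_one_sub_mul_of_coupled hw₁ hw₃ ha hdet'.le hsk (hU _) (hV _)
      (hrecU k hkK) (hrecV k hkK) |>.trans_eq (by ring)
  constructor
  · refine squeeze_zero hU (fun k => ?_) (by simpa using hW.div_const (w₃ + |w₂|))
    rw [le_div_iff₀ (by positivity)]
    nlinarith [hV k]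
  · refine squeeze_zero hV (fun k => ?_) (by simpa using hW.div_const (w₁ + |w₂|))
    rw [le_div_iff₀ (by positivity)]
    nlinarith [hU k]

/-- The coupled-recursion convergence argument at the heart of the paper's Theorem 1:
two nonnegative sequences `U`, `V` satisfying the coupled step-size-weighted contraction
inequalities with a positive definite coupling matrix `[[w₁, w₂], [w₂, w₃]]` both tend
to zero. -/
theorem stmt14 (h : ℕ) (hh : 1 ≤ h)
    (b : ℕ → ℝ) (hbpos : ∀ k, 1 ≤ k → 0 < b k)
    (hb0 : Tendsto b atTop (nhds 0))
    (hbdiv : Tendsto (fun n => ∑ k ∈ Finset.Icc 1 n, b k) atTop atTop)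
    (s : ℕ → ℝ) (hs : ∀ k, h < k → s k = ∑ j ∈ Finset.Icc (k - h + 1) k, b j)
    (w₁ w₂ w₃ : ℝ) (hw₁ : 0 < w₁) (hw₃ : 0 < w₃) (hw₂ : w₂ ≤ 0)
    (hdet : w₂ ^ 2 < w₁ * w₃)
    (U V : ℕ → ℝ) (hU : ∀ k, 0 ≤ U k) (hV : ∀ k, 0 ≤ V k)
    (K : ℕ) (hK : h ≤ K) (C : ℝ) (hC : 0 ≤ C)
    (hrecU : ∀ k, K < k →
      U k ≤ (1 - w₁ * s k) * U (k - h) + |w₂| * s k * V (k - h) + C * (b k) ^ 2)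
    (hrecV : ∀ k, K < k →
      V k ≤ (1 - w₃ * s k) * V (k - h) + |w₂| * s k * U (k - h) + C * (b k) ^ 2) :
    Tendsto U atTop (nhds 0) ∧ Tendsto V atTop (nhds 0) :=
  stmt14_general h hh b hbpos hb0 hbdiv s hs w₁ w₂ w₃ hw₁ hw₃ hdet U V hU hV K C hrecU hrecV
end

section
/- Let h ≥ 1 be an integer, p ∈ (1/2, 1), a > 0, C ≥ 0, and K ≥ h. Let (z_k)_{k≥0} be a sequence of nonnegative reals satisfying z_k ≤ (1 − a/k^p) z_{k−h} + C/k^{2p} for all k > K. Then z_k = O(1/k^p); that is, there exists M > 0 such that z_k ≤ M/k^p for all k ≥ 1. -/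
/-!
Take `M` so large that the bound `z k ≤ M / k ^ p` holds up to an index `N` beyond which
`a ≤ k ^ p`, `2 h ≤ k` and `4 h k ^ p ≤ a k`, and such that `2 C ≤ a M`. It then propagates by
strong induction along `k - h ↦ k`: since `(k / (k - h)) ^ p ≤ k / (k - h) ≤ 1 + 2 h / k`,
the recursion gives `z k ≤ (M / k ^ p) (1 - a / k ^ p) (1 + 2 h / k) + C / k ^ (2 p)`, and the
gain `a / k ^ p` beats both the loss `2 h / k ≤ a / (2 k ^ p)` and the forcing term
`C / k ^ (2 p) ≤ (a M / 2) / k ^ (2 p)`.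
-/

open Filter

theorem Nat.forall_of_base_of_step_sub {P : ℕ → Prop} {h N : ℕ} (hh : 1 ≤ h) (hN : h ≤ N)
    (base : ∀ k, 1 ≤ k → k ≤ N → P k) (step : ∀ k, N < k → P (k - h) → P k) :
    ∀ k, 1 ≤ k → P k := by
  intro k
  induction k using Nat.strong_induction_on with
  | _ k ih =>
    intro hk
    rcases le_or_gt k N with hkN | hNk
    · exact base k hk hkN
    · exact step k hNk (ih (k - h) (by omega) (by omega))

theorem exists_forall_le_div_rpow (z : ℕ → ℝ) (p : ℝ) (N : ℕ) :
    ∃ M, ∀ k : ℕ, 1 ≤ k → k ≤ N → z k ≤ M / (k : ℝ) ^ p := by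
  obtain ⟨M, hM⟩ := ((Set.finite_Iic N).image fun k : ℕ => z k * (k : ℝ) ^ p).bddAbove
  refine ⟨M, fun k hk hkN => ?_⟩
  have hk0 : (0 : ℝ) < k := by exact_mod_cast hk
  rw [le_div_iff₀ (Real.rpow_pos_of_pos hk0 p)]
  exact hM ⟨k, hkN, rfl⟩

theorem one_div_rpow_sub_le {x d p : ℝ} (hp : p ≤ 1) (hd : 0 ≤ d) (hx : 0 < x)
    (hdx : 2 * d ≤ x) : 1 / (x - d) ^ p ≤ (1 + 2 * d / x) / x ^ p := by
  have hxd : 0 < x - d := by linarith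
  rw [div_le_div_iff₀ (Real.rpow_pos_of_pos hxd p) (Real.rpow_pos_of_pos hx p), one_mul]
  calc x ^ p = (x / (x - d)) ^ p * (x - d) ^ p := by
        rw [Real.div_rpow hx.le hxd.le, div_mul_cancel₀ _ (Real.rpow_pos_of_pos hxd p).ne']
    _ ≤ x / (x - d) * (x - d) ^ p := by
        gcongr
        exact Real.rpow_le_self_of_one_le ((one_le_div hxd).2 (by linarith)) hp
    _ ≤ (1 + 2 * d / x) * (x - d) ^ p := by
        gcongr
        rw [div_le_iff₀ hxd, one_add_div hx.ne', div_mul_eq_mul_div, le_div_iff₀ hx]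
        nlinarith

theorem le_div_rpow_of_le_div_rpow_sub {a C M x d p y w : ℝ} (hp : p ≤ 1) (ha : 0 < a)
    (hM : 0 ≤ M) (hCM : 2 * C ≤ a * M) (hd : 0 ≤ d) (hx : 0 < x) (hdx : 2 * d ≤ x)
    (hax : a ≤ x ^ p) (hdxp : 4 * d / a ≤ x ^ (1 - p)) (hw : w ≤ M / (x - d) ^ p)
    (hy : y ≤ (1 - a / x ^ p) * w + C / x ^ (2 * p)) : y ≤ M / x ^ p := by
  set s := x ^ p
  have hs : 0 < s := Real.rpow_pos_of_pos hx p
  have hx2p : x ^ (2 * p) = s ^ 2 := by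
    rw [mul_comm, ← Nat.cast_ofNat, Real.rpow_mul_natCast hx.le]
  have hu : 0 ≤ a / s := by positivity
  have hgain : 0 ≤ 1 - a / s := sub_nonneg.2 ((div_le_one hs).2 hax)
  have hloss : 2 * d / x ≤ a / s / 2 := by
    rw [Real.rpow_sub hx, Real.rpow_one, div_le_div_iff₀ ha hs] at hdxp
    rw [div_div, div_le_div_iff₀ hx (by positivity)]
    linarith
  have hv : 0 ≤ 2 * d / x := by positivity
  have hw' : w ≤ M * ((1 + 2 * d / x) / s) := by
    rw [div_eq_mul_one_div] at hw
    exact hw.trans (mul_le_mul_of_nonneg_left (one_div_rpow_sub_le hp hd hx hdx) hM)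
  calc y ≤ (1 - a / s) * (M * ((1 + 2 * d / x) / s)) + C / s ^ 2 := by
        rw [hx2p] at hy
        exact hy.trans (by gcongr)
    _ = M / s * ((1 - a / s) * (1 + 2 * d / x)) + C / s ^ 2 := by ring
    _ ≤ M / s * (1 - a / s / 2) + a * M / 2 / s ^ 2 := by
        gcongr
        · nlinarith [mul_nonneg hu hv]
        · linarith
    _ = M / s := by field_simp; ring

theorem stmt15_general (h : ℕ) (hh : 1 ≤ h) (p : ℝ) (hp1 : 1 / 2 < p) (hp2 : p < 1)
    (a : ℝ) (ha : 0 < a) (C : ℝ) (K : ℕ)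
    (z : ℕ → ℝ)
    (hrec : ∀ k, K < k →
      z k ≤ (1 - a / (k : ℝ) ^ p) * z (k - h) + C / (k : ℝ) ^ (2 * p)) :
    ∃ M : ℝ, 0 < M ∧ ∀ k : ℕ, 1 ≤ k → z k ≤ M / (k : ℝ) ^ p := by
  have hpow (q b : ℝ) (hq : 0 < q) : ∀ᶠ k : ℕ in atTop, b ≤ (k : ℝ) ^ q :=
    ((tendsto_rpow_atTop hq).comp tendsto_natCast_atTop_atTop).eventually_ge_atTop b
  obtain ⟨N, hN⟩ := eventually_atTop.mp <|
    (hpow p a (by linarith)).and <| (hpow (1 - p) (4 * h / a) (sub_pos.2 hp2)).and <|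
      (eventually_gt_atTop K).and (eventually_ge_atTop (2 * h))
  obtain ⟨M₀, hM₀⟩ := exists_forall_le_div_rpow z p N
  set M := max (max M₀ (2 * C / a)) 1
  have hM : 0 < M := lt_max_of_lt_right one_pos
  have hCM : 2 * C ≤ a * M := by
    rw [← div_le_iff₀' ha]
    exact (le_max_right _ _).trans (le_max_left _ _)
  refine ⟨M, hM, Nat.forall_of_base_of_step_sub hh (by linarith [(hN N le_rfl).2.2.2])
    (fun k hk hkN => (hM₀ k hk hkN).trans ?_) fun k hNk hIH => ?_⟩
  · gcongr
    exact (le_max_left _ _).trans (le_max_left _ _)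
  obtain ⟨hak, hhk, hKk, h2hk⟩ := hN k hNk.le
  have hcast : ((k - h : ℕ) : ℝ) = k - h := Nat.cast_sub (by omega)
  rw [hcast] at hIH
  exact le_div_rpow_of_le_div_rpow_sub hp2.le ha hM.le hCM (Nat.cast_nonneg h)
    (by exact_mod_cast (by omega : 0 < k)) (by exact_mod_cast h2hk) hak hhk hIH (hrec k hKk)

/-- The scalar rate recursion from Part I of the proof of the paper's Theorem 2: if a
nonnegative sequence satisfies `z_k ≤ (1 - a/k^p) z_{k-h} + C/k^{2p}` for all `k > K`
with `p ∈ (1/2, 1)`, then `z_k = O(1/k^p)`. -/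
theorem stmt15 (h : ℕ) (hh : 1 ≤ h) (p : ℝ) (hp1 : 1 / 2 < p) (hp2 : p < 1)
    (a : ℝ) (ha : 0 < a) (C : ℝ) (hC : 0 ≤ C) (K : ℕ) (hK : h ≤ K)
    (z : ℕ → ℝ) (hz : ∀ k, 0 ≤ z k)
    (hrec : ∀ k, K < k →
      z k ≤ (1 - a / (k : ℝ) ^ p) * z (k - h) + C / (k : ℝ) ^ (2 * p)) :
    ∃ M : ℝ, 0 < M ∧ ∀ k : ℕ, 1 ≤ k → z k ≤ M / (k : ℝ) ^ p :=
  stmt15_general h hh p hp1 hp2 a ha C K z hrec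
end

section
/- Let h ≥ 1 be an integer, a > h a real number, C ≥ 0, and K ≥ h. Let (z_k)_{k≥0} be a sequence of nonnegative reals satisfying z_k ≤ (1 − a/k) z_{k−h} + C/k² for all k > K. Then z_k = O(1/k); that is, there exists M > 0 such that z_k ≤ M/k for all k ≥ 1. -/
/-! The weighted sequence `k z_k` stays below a single constant `M`, by strong induction on `k`.
Up to `K` this is how `M` is chosen. Beyond `K`, if `a ≥ k` the recursion gives `z_k ≤ C/k²`.
Otherwise `M/k - (1 - a/k) M/(k-h) = M(a-h)/(k(k-h)) ≥ M(a-h)/k²`, which absorbs the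
forcing term `C/k²` once `C ≤ M(a-h)`; this is exactly where `a > h` enters. -/

section RateRecursion

variable {a h C M k : ℝ}

theorem div_sq_le_div_of_le (hC : 0 ≤ C) (hCM : C ≤ M) (hk : 1 ≤ k) : C / k ^ 2 ≤ M / k := by
  have hk0 : 0 < k := by linarith
  rw [div_le_div_iff₀ (by positivity) hk0]
  have hM : 0 ≤ M := hC.trans hCM
  nlinarith [mul_le_mul_of_nonneg_left hk (mul_nonneg hM hk0.le)]

theorem one_sub_div_mul_div_add_div_sq_le (hh : 0 ≤ h) (hhk : h < k) (hC : 0 ≤ C)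
    (hCM : C ≤ M * (a - h)) : (1 - a / k) * (M / (k - h)) + C / k ^ 2 ≤ M / k := by
  have hkh : 0 < k - h := by linarith
  have hk : 0 < k := by linarith
  have hgap : M / k - ((1 - a / k) * (M / (k - h)) + C / k ^ 2)
      = (M * (a - h) * k - C * (k - h)) / (k ^ 2 * (k - h)) := by
    field_simp
    ring
  rw [← sub_nonneg, hgap]
  apply div_nonneg _ (by positivity)
  nlinarith [mul_le_mul_of_nonneg_right hCM hk.le]

end RateRecursion

theorem le_div_of_le_one_sub_div_mul_add {h K : ℕ} {a C M : ℝ} {z : ℕ → ℝ} (hh : 1 ≤ h)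
    (ha : (h : ℝ) < a) (hC : 0 ≤ C) (hz : ∀ k, 0 ≤ z k)
    (hrec : ∀ k, K < k → z k ≤ (1 - a / (k : ℝ)) * z (k - h) + C / (k : ℝ) ^ 2)
    (hinit : ∀ k, k ≤ K → (k : ℝ) * z k ≤ M) (hCM : C ≤ M) (hCMa : C ≤ M * (a - h)) :
    ∀ k : ℕ, 1 ≤ k → z k ≤ M / (k : ℝ) := by
  intro k
  induction k using Nat.strong_induction_on with
  | _ k ih =>
    intro hk
    have hk1 : (1 : ℝ) ≤ k := by exact_mod_cast hk
    have hk0 : (0 : ℝ) < k := by linarith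
    rcases le_or_gt k K with hkK | hKk
    · rw [le_div_iff₀ hk0, mul_comm]
      exact hinit k hkK
    rcases le_or_gt (k : ℝ) a with hka | hak
    · have hcoef : 1 - a / (k : ℝ) ≤ 0 := by
        rw [sub_nonpos, one_le_div hk0]
        exact hka
      calc z k ≤ (1 - a / (k : ℝ)) * z (k - h) + C / (k : ℝ) ^ 2 := hrec k hKk
        _ ≤ C / (k : ℝ) ^ 2 := by nlinarith [mul_nonpos_of_nonpos_of_nonneg hcoef (hz (k - h))]
        _ ≤ M / k := div_sq_le_div_of_le hC hCM hk1
    · have hhk : h < k := by exact_mod_cast ha.trans hak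
      have hcoef : 0 ≤ 1 - a / (k : ℝ) := by
        rw [sub_nonneg, div_le_one hk0]
        exact hak.le
      have hprev : z (k - h) ≤ M / ((k : ℝ) - h) := by
        rw [← Nat.cast_sub hhk.le]
        exact ih (k - h) (by omega) (by omega)
      calc z k ≤ (1 - a / (k : ℝ)) * z (k - h) + C / (k : ℝ) ^ 2 := hrec k hKk
        _ ≤ (1 - a / (k : ℝ)) * (M / ((k : ℝ) - h)) + C / (k : ℝ) ^ 2 := by gcongr
        _ ≤ M / k := one_sub_div_mul_div_add_div_sq_le (Nat.cast_nonneg h)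
          (by exact_mod_cast hhk) hC hCMa

theorem stmt16_general (h : ℕ) (hh : 1 ≤ h) (a : ℝ) (ha : (h : ℝ) < a)
    (C : ℝ) (hC : 0 ≤ C) (K : ℕ)
    (z : ℕ → ℝ) (hz : ∀ k, 0 ≤ z k)
    (hrec : ∀ k, K < k →
      z k ≤ (1 - a / (k : ℝ)) * z (k - h) + C / (k : ℝ) ^ 2) :
    ∃ M : ℝ, 0 < M ∧ ∀ k : ℕ, 1 ≤ k → z k ≤ M / (k : ℝ) := by
  have hah : (0 : ℝ) < a - h := by linarith
  set S : ℝ := ∑ i ∈ Finset.range (K + 1), (i : ℝ) * z i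
  have hterm : ∀ i : ℕ, 0 ≤ (i : ℝ) * z i := fun i => mul_nonneg (Nat.cast_nonneg i) (hz i)
  have hS : 0 ≤ S := Finset.sum_nonneg fun i _ => hterm i
  have hCa : 0 ≤ C / (a - h) := div_nonneg hC hah.le
  refine ⟨S + C / (a - h) + C + 1, by positivity,
    le_div_of_le_one_sub_div_mul_add hh ha hC hz hrec ?_ (by linarith) ?_⟩
  · intro k hkK
    have hkS : (k : ℝ) * z k ≤ S :=
      Finset.single_le_sum (fun i _ => hterm i) (Finset.mem_range.mpr (Nat.lt_succ_of_le hkK))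
    linarith
  · exact (div_le_iff₀ hah).mp (by linarith)

/-- The scalar rate recursion from Part II of the proof of the paper's Theorem 2: if a
nonnegative sequence satisfies `z_k ≤ (1 - a/k) z_{k-h} + C/k²` for all `k > K` with
`a > h`, then `z_k = O(1/k)`. -/
theorem stmt16 (h : ℕ) (hh : 1 ≤ h) (a : ℝ) (ha : (h : ℝ) < a)
    (C : ℝ) (hC : 0 ≤ C) (K : ℕ) (hK : h ≤ K)
    (z : ℕ → ℝ) (hz : ∀ k, 0 ≤ z k)
    (hrec : ∀ k, K < k →
      z k ≤ (1 - a / (k : ℝ)) * z (k - h) + C / (k : ℝ) ^ 2) :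
    ∃ M : ℝ, 0 < M ∧ ∀ k : ℕ, 1 ≤ k → z k ≤ M / (k : ℝ) :=
  stmt16_general h hh a ha C hC K z hz hrec
end

section
/- Let m, n, h be positive integers and f > 0, φ̄ > 0, δ > 0, λ₂ > 0. For l = 1, …, h and i = 1, …, m let φ_{l,i} ∈ ℝⁿ with ‖φ_{l,i}‖ ≤ φ̄, and suppose ∑_{i=1}^m ∑_{l=1}^h φ_{l,i} φ_{l,i}ᵀ ⪰ m·h·δ²·I_n. Let L ∈ ℝ^{m×m} be symmetric positive semidefinite with L𝟙 = 0 and xᵀLx ≥ λ₂‖x‖² for every x ∈ ℝ^m orthogonal to the all-ones vector 𝟙. For each l let D_l ∈ ℝ^{mn×mn} be the block-diagonal matrix with diagonal blocks φ_{l,1}φ_{l,1}ᵀ, …, φ_{l,m}φ_{l,m}ᵀ. Then λ_min( (f/h)·∑_{l=1}^h D_l + h·(L ⊗ I_n) ) ≥ h·f·λ₂·δ² / (2f·φ̄² + h·λ₂). -/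
/-!
Write a vector of `ℝ^{mn}` as blocks `xᵢ = x̄ + yᵢ`, where `x̄` is the average of the agents'
blocks and the disagreement `y` has zero column sums, so that `‖x‖² = m‖x̄‖² + ‖y‖²`. The Laplacian
term only sees `y` and contributes at least `h λ₂ ‖y‖²`. In the regressor term
`∑ₗ ∑ᵢ (φₗᵢ ⬝ (x̄ + yᵢ))²`, a weighted Young inequality keeps the fraction `c / (1 + c)` of the
excitation bound `m h δ² ‖x̄‖²` at the price of `c h φ̄² ‖y‖²`. With `c = h λ₂ / (2 f φ̄²)` this
price is half of the Laplacian gain, and what remains is `σ m ‖x̄‖² + (h λ₂ / 2) ‖y‖²`, where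
`σ = h f λ₂ δ² / (2 f φ̄² + h λ₂) ≤ h λ₂ / 2` because excitation forces `δ ≤ φ̄`.
-/

open Matrix
open scoped Kronecker

section

variable {ι : Type*} [Fintype ι]

theorem posSemidef_sub_smul_one_iff [DecidableEq ι] {A : Matrix ι ι ℝ} {c : ℝ} :
    (A - c • 1).PosSemidef ↔ A.IsHermitian ∧ ∀ v, c * (v ⬝ᵥ v) ≤ v ⬝ᵥ (A *ᵥ v) := by
  have hc : (c • 1 : Matrix ι ι ℝ).IsHermitian := isHermitian_one.smul (IsSelfAdjoint.all c)
  have hherm : (A - c • 1).IsHermitian ↔ A.IsHermitian :=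
    ⟨fun h => by simpa using h.add hc, fun h => h.sub hc⟩
  have hquad (v : ι → ℝ) : v ⬝ᵥ ((A - c • 1) *ᵥ v) = v ⬝ᵥ (A *ᵥ v) - c * (v ⬝ᵥ v) := by
    rw [sub_mulVec, dotProduct_sub, smul_mulVec, one_mulVec, dotProduct_smul, smul_eq_mul]
  simp only [posSemidef_iff_dotProduct_mulVec, hherm, star_trivial, hquad, sub_nonneg]

theorem dotProduct_vecMulVec_self_mulVec (w v : ι → ℝ) :
    v ⬝ᵥ (vecMulVec w w *ᵥ v) = (w ⬝ᵥ v) ^ 2 := by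
  rw [vecMulVec_mulVec, op_smul_eq_smul, dotProduct_smul, smul_eq_mul, dotProduct_comm, sq]

theorem sq_dotProduct_le_of_norm_le {w : EuclideanSpace ℝ ι} {r : ℝ} (hw : ‖w‖ ≤ r)
    (v : ι → ℝ) : (w.ofLp ⬝ᵥ v) ^ 2 ≤ r ^ 2 * (v ⬝ᵥ v) := by
  have hw2 : ∑ j, w j ^ 2 ≤ r ^ 2 := by
    rw [← EuclideanSpace.real_norm_sq_eq]
    exact pow_le_pow_left₀ (norm_nonneg w) hw 2
  calc (w.ofLp ⬝ᵥ v) ^ 2 ≤ (∑ j, w j ^ 2) * ∑ j, v j ^ 2 := Finset.sum_mul_sq_le_sq_mul_sq _ _ _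
    _ ≤ r ^ 2 * (v ⬝ᵥ v) := by
      simp only [dotProduct, ← sq]
      gcongr

end

section Excitation

variable {ι τ κ : Type*} [Fintype ι] [Fintype τ] [Fintype κ] {w : ι → τ → κ → ℝ} {c r : ℝ}

theorem mul_dotProduct_self_le_of_posSemidef_sub [DecidableEq κ]
    (hw : ((∑ i, ∑ l, vecMulVec (w i l) (w i l)) - c • 1).PosSemidef) (v : κ → ℝ) :
    c * (v ⬝ᵥ v) ≤ ∑ i, ∑ l, (w i l ⬝ᵥ v) ^ 2 := by
  have := (posSemidef_sub_smul_one_iff.1 hw).2 v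
  simpa only [sum_mulVec, dotProduct_sum, dotProduct_vecMulVec_self_mulVec] using this

theorem le_card_mul_card_mul_of_excitation [Nonempty κ]
    (hexc : ∀ v, c * (v ⬝ᵥ v) ≤ ∑ i, ∑ l, (w i l ⬝ᵥ v) ^ 2)
    (hw : ∀ i l v, (w i l ⬝ᵥ v) ^ 2 ≤ r * (v ⬝ᵥ v)) :
    c ≤ Fintype.card ι * Fintype.card τ * r := by
  set N : ℝ := (fun _ : κ => (1 : ℝ)) ⬝ᵥ fun _ => 1
  have hN : 0 < N := by simp [N, dotProduct, Fintype.card_pos]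
  have := (hexc _).trans
    (Finset.sum_le_sum fun i _ => Finset.sum_le_sum fun l _ => hw i l fun _ => 1)
  simp only [Finset.sum_const, Finset.card_univ, nsmul_eq_mul] at this
  exact le_of_mul_le_mul_right (by linarith) hN

end Excitation

section Blocks

variable {ι κ : Type*}

def blockDiagOuter [DecidableEq ι] (g : ι → κ → ℝ) : Matrix (ι × κ) (ι × κ) ℝ :=
  of fun p q => if p.1 = q.1 then g p.1 p.2 * g p.1 q.2 else 0

theorem isHermitian_blockDiagOuter [DecidableEq ι] (g : ι → κ → ℝ) :
    (blockDiagOuter g).IsHermitian := by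
  refine IsHermitian.ext fun p q => ?_
  simp only [blockDiagOuter, of_apply, star_trivial]
  by_cases hpq : p.1 = q.1
  · rw [if_pos hpq.symm, if_pos hpq, hpq, mul_comm]
  · rw [if_neg (Ne.symm hpq), if_neg hpq]

variable [Fintype ι]

theorem exists_eq_add_of_sum_fst_eq_zero [Nonempty ι] (x : ι × κ → ℝ) :
    ∃ (v : κ → ℝ) (y : ι × κ → ℝ), (∀ j, ∑ i, y (i, j) = 0) ∧ x = fun p => v p.2 + y p := by
  refine ⟨fun j => (∑ i, x (i, j)) / Fintype.card ι,
    fun p => x p - (∑ i, x (i, p.2)) / Fintype.card ι, fun j => ?_, by simp⟩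
  simp only [Finset.sum_sub_distrib, Finset.sum_const, Finset.card_univ, nsmul_eq_mul]
  rw [mul_div_cancel₀ _ (by positivity), sub_self]

variable [Fintype κ]

theorem dotProduct_self_add_of_sum_fst_eq_zero {y : ι × κ → ℝ} (hy : ∀ j, ∑ i, y (i, j) = 0)
    (v : κ → ℝ) : (fun p => v p.2 + y p) ⬝ᵥ (fun p => v p.2 + y p) =
      Fintype.card ι * (v ⬝ᵥ v) + y ⬝ᵥ y := by
  have hcross : ∑ p : ι × κ, v p.2 * y p = 0 := by
    rw [Fintype.sum_prod_type, Finset.sum_comm]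
    simp only [← Finset.mul_sum, hy, mul_zero, Finset.sum_const_zero]
  have hmean : ∑ p : ι × κ, v p.2 * v p.2 = Fintype.card ι * (v ⬝ᵥ v) := by
    simp only [Fintype.sum_prod_type, Finset.sum_const, Finset.card_univ, nsmul_eq_mul, dotProduct]
  simp only [dotProduct, add_mul, mul_add, Finset.sum_add_distrib, mul_comm (y _), hcross, hmean]
  ring

theorem blockDiagOuter_mulVec [DecidableEq ι] (g : ι → κ → ℝ) (x : ι × κ → ℝ) :
    blockDiagOuter g *ᵥ x = fun p => g p.1 p.2 * (g p.1 ⬝ᵥ fun j => x (p.1, j)) := by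
  ext p
  simp [mulVec, dotProduct, blockDiagOuter, Fintype.sum_prod_type, ite_mul, Finset.mul_sum,
    mul_assoc]

theorem dotProduct_blockDiagOuter_mulVec [DecidableEq ι] (g : ι → κ → ℝ) (x : ι × κ → ℝ) :
    x ⬝ᵥ (blockDiagOuter g *ᵥ x) = ∑ i, (g i ⬝ᵥ fun j => x (i, j)) ^ 2 := by
  simp only [blockDiagOuter_mulVec, dotProduct, Fintype.sum_prod_type, sq, Finset.sum_mul]
  exact Finset.sum_congr rfl fun i _ => Finset.sum_congr rfl fun j _ => by ring

theorem kronecker_one_mulVec [DecidableEq κ] (L : Matrix ι ι ℝ) (x : ι × κ → ℝ) :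
    (L ⊗ₖ (1 : Matrix κ κ ℝ)) *ᵥ x = fun p => (L *ᵥ fun i => x (i, p.2)) p.1 := by
  ext p
  simp [mulVec, dotProduct, Fintype.sum_prod_type, one_apply]

theorem dotProduct_kronecker_one_mulVec [DecidableEq κ] (L : Matrix ι ι ℝ) (x : ι × κ → ℝ) :
    x ⬝ᵥ ((L ⊗ₖ (1 : Matrix κ κ ℝ)) *ᵥ x) =
      ∑ j, (fun i => x (i, j)) ⬝ᵥ (L *ᵥ fun i => x (i, j)) := by
  rw [kronecker_one_mulVec, dotProduct, Fintype.sum_prod_type, Finset.sum_comm]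
  rfl

end Blocks

section Laplacian

variable {ι : Type*} [Fintype ι] {L : Matrix ι ι ℝ} {lam : ℝ}

theorem mul_dotProduct_self_le_of_spectral_gap (hL : L.IsHermitian)
    (hL1 : L *ᵥ (fun _ => 1) = 0)
    (hgap : ∀ x : ι → ℝ, x ⬝ᵥ (fun _ => 1) = 0 → lam * (x ⬝ᵥ x) ≤ x ⬝ᵥ (L *ᵥ x))
    {y : ι → ℝ} (hy : ∑ i, y i = 0) (c : ℝ) :
    lam * (y ⬝ᵥ y) ≤ (fun i => c + y i) ⬝ᵥ (L *ᵥ fun i => c + y i) := by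
  have hsplit : (fun i => c + y i) = c • (fun _ => (1 : ℝ)) + y := by ext; simp
  have h1L : (fun _ => (1 : ℝ)) ⬝ᵥ (L *ᵥ y) = 0 := by
    rw [dotProduct_mulVec, ← mulVec_transpose, ← conjTranspose_eq_transpose_of_trivial, hL.eq,
      hL1, zero_dotProduct]
  rw [hsplit, mulVec_add, mulVec_smul, hL1, smul_zero, zero_add, add_dotProduct,
    smul_dotProduct, h1L, smul_zero, zero_add]
  exact hgap y (by simpa [dotProduct] using hy)

theorem mul_dotProduct_self_le_kronecker_one {κ : Type*} [Fintype κ] [DecidableEq κ]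
    (hL : L.IsHermitian) (hL1 : L *ᵥ (fun _ => 1) = 0)
    (hgap : ∀ x : ι → ℝ, x ⬝ᵥ (fun _ => 1) = 0 → lam * (x ⬝ᵥ x) ≤ x ⬝ᵥ (L *ᵥ x))
    {y : ι × κ → ℝ} (hy : ∀ j, ∑ i, y (i, j) = 0) (v : κ → ℝ) :
    lam * (y ⬝ᵥ y) ≤
      (fun p => v p.2 + y p) ⬝ᵥ ((L ⊗ₖ (1 : Matrix κ κ ℝ)) *ᵥ fun p => v p.2 + y p) := by
  rw [dotProduct_kronecker_one_mulVec]
  calc lam * (y ⬝ᵥ y) = ∑ j, lam * ((fun i => y (i, j)) ⬝ᵥ fun i => y (i, j)) := by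
        rw [dotProduct, Fintype.sum_prod_type, Finset.sum_comm, Finset.mul_sum]
        rfl
    _ ≤ _ := Finset.sum_le_sum fun j _ =>
        mul_dotProduct_self_le_of_spectral_gap hL hL1 hgap (hy j) (v j)

end Laplacian

section Regressors

variable {τ ι κ : Type*} [Fintype τ] [Fintype ι] [Fintype κ] {g : τ → ι → κ → ℝ} {r : ℝ}

-- `(1 + c) ((a + b)² + c b²) - c a² = (a + (1 + c) b)²`
theorem mul_sq_le_one_add_mul_sq_add (a b c : ℝ) :
    c * a ^ 2 ≤ (1 + c) * ((a + b) ^ 2 + c * b ^ 2) := by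
  nlinarith [sq_nonneg (a + (1 + c) * b)]

theorem sum_sum_sq_dotProduct_le (hg : ∀ t i u, (g t i ⬝ᵥ u) ^ 2 ≤ r * (u ⬝ᵥ u))
    (y : ι × κ → ℝ) :
    ∑ t, ∑ i, (g t i ⬝ᵥ fun j => y (i, j)) ^ 2 ≤ Fintype.card τ * r * (y ⬝ᵥ y) := by
  calc _ ≤ ∑ _t : τ, ∑ i, r * ((fun j => y (i, j)) ⬝ᵥ fun j => y (i, j)) :=
        Finset.sum_le_sum fun t _ => Finset.sum_le_sum fun i _ => hg t i _
    _ = Fintype.card τ * r * (y ⬝ᵥ y) := by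
        simp only [← Finset.mul_sum, Finset.sum_const, Finset.card_univ, nsmul_eq_mul, dotProduct,
          Fintype.sum_prod_type]
        ring

theorem le_sum_dotProduct_blockDiagOuter_mulVec [DecidableEq ι]
    (hg : ∀ t i u, (g t i ⬝ᵥ u) ^ 2 ≤ r * (u ⬝ᵥ u)) (v : κ → ℝ) (y : ι × κ → ℝ) {c A : ℝ}
    (hc : 0 ≤ c) (hA : A ≤ ∑ i, ∑ t, (g t i ⬝ᵥ v) ^ 2) :
    c * A ≤ (1 + c) * (∑ t, (fun p => v p.2 + y p) ⬝ᵥ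
      (blockDiagOuter (g t) *ᵥ fun p => v p.2 + y p) + c * (Fintype.card τ * r * (y ⬝ᵥ y))) := by
  have hsplit (t : τ) (i : ι) : (g t i ⬝ᵥ fun j => v j + y (i, j)) =
      g t i ⬝ᵥ v + g t i ⬝ᵥ fun j => y (i, j) := dotProduct_add _ _ _
  rw [Finset.sum_comm] at hA
  simp only [dotProduct_blockDiagOuter_mulVec, hsplit]
  calc c * A ≤ ∑ t, ∑ i, c * (g t i ⬝ᵥ v) ^ 2 := by
        simp only [← Finset.mul_sum]
        exact mul_le_mul_of_nonneg_left hA hc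
    _ ≤ ∑ t, ∑ i, (1 + c) * ((g t i ⬝ᵥ v + g t i ⬝ᵥ fun j => y (i, j)) ^ 2 +
          c * (g t i ⬝ᵥ fun j => y (i, j)) ^ 2) :=
        Finset.sum_le_sum fun t _ => Finset.sum_le_sum fun i _ => mul_sq_le_one_add_mul_sq_add _ _ c
    _ ≤ _ := by
        simp only [← Finset.mul_sum, Finset.sum_add_distrib]
        gcongr
        exact sum_sum_sq_dotProduct_le hg y

end Regressors

theorem contraction_bound {m h f φ δ lam X Y S K : ℝ} (hh : 0 < h) (hf : 0 < f) (hφ : 0 < φ)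
    (hlam : 0 < lam) (hδφ : δ ^ 2 ≤ φ ^ 2) (hY : 0 ≤ Y)
    (hS : h * lam / (2 * f * φ ^ 2) * (m * h * δ ^ 2 * X) ≤
      (1 + h * lam / (2 * f * φ ^ 2)) * (S + h * lam / (2 * f * φ ^ 2) * (h * φ ^ 2 * Y)))
    (hK : lam * Y ≤ K) :
    h * f * lam * δ ^ 2 / (2 * f * φ ^ 2 + h * lam) * (m * X + Y) ≤ f / h * S + h * K := by
  have hT : 0 < 2 * f * φ ^ 2 + h * lam := by positivity
  have hscale : 0 ≤ 2 * f * φ ^ 2 * f / (h * (2 * f * φ ^ 2 + h * lam)) := by positivity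
  have hS' : h * f * lam * δ ^ 2 / (2 * f * φ ^ 2 + h * lam) * m * X ≤
      f / h * S + h * lam / 2 * Y := by
    calc _ = _ * (h * lam / (2 * f * φ ^ 2) * (m * h * δ ^ 2 * X)) := by field_simp
      _ ≤ _ := mul_le_mul_of_nonneg_left hS hscale
      _ = _ := by field_simp
  have hσ : h * f * lam * δ ^ 2 / (2 * f * φ ^ 2 + h * lam) ≤ h * lam / 2 := by
    rw [div_le_div_iff₀ hT two_pos]
    nlinarith [mul_le_mul_of_nonneg_left hδφ (by positivity : 0 ≤ h * f * lam),
      mul_pos (mul_pos hh hlam) (mul_pos hh hlam)]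
  nlinarith [mul_le_mul_of_nonneg_right hσ hY, mul_le_mul_of_nonneg_left hK hh.le]

theorem stmt17_general (m n h : ℕ) (hm : 0 < m) (hn : 0 < n) (hh : 0 < h)
    (f φbar δ lam₂ : ℝ) (hf : 0 < f) (hφbar : 0 < φbar) (hlam₂ : 0 < lam₂)
    (φ : Fin h → Fin m → EuclideanSpace ℝ (Fin n))
    (hφ : ∀ l i, ‖φ l i‖ ≤ φbar)
    (hexc : ((∑ i, ∑ l, Matrix.of (fun x y : Fin n => φ l i x * φ l i y)) -
      ((m : ℝ) * h * δ ^ 2) • (1 : Matrix (Fin n) (Fin n) ℝ)).PosSemidef)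
    (L : Matrix (Fin m) (Fin m) ℝ)
    (hL : L.PosSemidef)
    (hL1 : L *ᵥ (fun _ => 1) = 0)
    (hgap : ∀ x : Fin m → ℝ, x ⬝ᵥ (fun _ => (1 : ℝ)) = 0 →
      lam₂ * (x ⬝ᵥ x) ≤ x ⬝ᵥ (L *ᵥ x))
    (D : Fin h → Matrix (Fin m × Fin n) (Fin m × Fin n) ℝ)
    (hD : ∀ l, D l = Matrix.of (fun p q : Fin m × Fin n =>
      if p.1 = q.1 then φ l p.1 p.2 * φ l p.1 q.2 else 0)) :
    (((f / h) • ∑ l, D l + (h : ℝ) • (L ⊗ₖ (1 : Matrix (Fin n) (Fin n) ℝ))) -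
      ((h : ℝ) * f * lam₂ * δ ^ 2 / (2 * f * φbar ^ 2 + h * lam₂)) •
        (1 : Matrix (Fin m × Fin n) (Fin m × Fin n) ℝ)).PosSemidef := by
  have hh' : (0 : ℝ) < h := Nat.cast_pos.2 hh
  have : Nonempty (Fin m) := Fin.pos_iff_nonempty.1 hm
  have : Nonempty (Fin n) := Fin.pos_iff_nonempty.1 hn
  obtain rfl : D = fun l => blockDiagOuter fun i => (φ l i).ofLp := funext hD
  have hExc := mul_dotProduct_self_le_of_posSemidef_sub (w := fun i l => (φ l i).ofLp) hexc
  have hCS (l : Fin h) (i : Fin m) := sq_dotProduct_le_of_norm_le (hφ l i)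
  have hδφ : δ ^ 2 ≤ φbar ^ 2 := by
    have := le_card_mul_card_mul_of_excitation hExc fun i l => hCS l i
    simp only [Fintype.card_fin] at this
    exact le_of_mul_le_mul_left (by linarith) (by positivity : (0 : ℝ) < m * h)
  have hM : ((f / h) • ∑ l, blockDiagOuter (fun i => (φ l i).ofLp) +
      (h : ℝ) • (L ⊗ₖ (1 : Matrix (Fin n) (Fin n) ℝ))).IsHermitian :=
    have hsum : (∑ l, blockDiagOuter fun i => (φ l i).ofLp).IsHermitian :=
      isSelfAdjoint_sum Finset.univ fun l _ => isHermitian_blockDiagOuter fun i => (φ l i).ofLp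
    (hsum.smul (.all _)).add ((hL.kronecker PosSemidef.one).1.smul (.all _))
  refine posSemidef_sub_smul_one_iff.2 ⟨hM, fun x => ?_⟩
  obtain ⟨v, y, hy, rfl⟩ := exists_eq_add_of_sum_fst_eq_zero x
  rw [dotProduct_self_add_of_sum_fst_eq_zero hy, Fintype.card_fin, add_mulVec, dotProduct_add,
    smul_mulVec, smul_mulVec, dotProduct_smul, dotProduct_smul, sum_mulVec, dotProduct_sum,
    smul_eq_mul, smul_eq_mul]
  have hReg := le_sum_dotProduct_blockDiagOuter_mulVec (fun l i => hCS l i) v y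
    (c := h * lam₂ / (2 * f * φbar ^ 2)) (by positivity) (hExc v)
  rw [Fintype.card_fin] at hReg
  exact contraction_bound hh' hf hφbar hlam₂ hδφ (dotProduct_star_self_nonneg y) hReg
    (mul_dotProduct_self_le_kronecker_one hL.1 hL1 hgap hy v)

/-- The deterministic core of step (lemmaV_k6) in the proof of the paper's Lemma 2: the
cooperative excitation condition on the regressors `φ_{l,i}` together with the spectral gap
`λ₂` of the Laplacian `L` yields
`λ_min((f/h) ∑ₗ Dₗ + h (L ⊗ Iₙ)) ≥ h f λ₂ δ² / (2 f φ̄² + h λ₂)`, where `Dₗ` is the block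
diagonal matrix with blocks `φ_{l,1}φ_{l,1}ᵀ, …, φ_{l,m}φ_{l,m}ᵀ` and the eigenvalue bound is
expressed via the positive semidefinite order. -/
theorem stmt17 (m n h : ℕ) (hm : 0 < m) (hn : 0 < n) (hh : 0 < h)
    (f φbar δ lam₂ : ℝ) (hf : 0 < f) (hφbar : 0 < φbar) (hδ : 0 < δ) (hlam₂ : 0 < lam₂)
    (φ : Fin h → Fin m → EuclideanSpace ℝ (Fin n))
    (hφ : ∀ l i, ‖φ l i‖ ≤ φbar)
    (hexc : ((∑ i, ∑ l, Matrix.of (fun x y : Fin n => φ l i x * φ l i y)) -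
      ((m : ℝ) * h * δ ^ 2) • (1 : Matrix (Fin n) (Fin n) ℝ)).PosSemidef)
    (L : Matrix (Fin m) (Fin m) ℝ)
    (hL : L.PosSemidef)
    (hL1 : L *ᵥ (fun _ => 1) = 0)
    (hgap : ∀ x : Fin m → ℝ, x ⬝ᵥ (fun _ => (1 : ℝ)) = 0 →
      lam₂ * (x ⬝ᵥ x) ≤ x ⬝ᵥ (L *ᵥ x))
    (D : Fin h → Matrix (Fin m × Fin n) (Fin m × Fin n) ℝ)
    (hD : ∀ l, D l = Matrix.of (fun p q : Fin m × Fin n =>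
      if p.1 = q.1 then φ l p.1 p.2 * φ l p.1 q.2 else 0)) :
    (((f / h) • ∑ l, D l + (h : ℝ) • (L ⊗ₖ (1 : Matrix (Fin n) (Fin n) ℝ))) -
      ((h : ℝ) * f * lam₂ * δ ^ 2 / (2 * f * φbar ^ 2 + h * lam₂)) •
        (1 : Matrix (Fin m × Fin n) (Fin m × Fin n) ℝ)).PosSemidef :=
  stmt17_general m n h hm hn hh f φbar δ lam₂ hf hφbar hlam₂ φ hφ hexc L hL hL1 hgap D hD
end
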